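/- arXiv:2512.22754 — 7 statements merged into one kernel-verified Lean document; each statement's English description precedes it below -/
import Mathlib

section
/- Let q ≥ 2, d odd, w ≤ n, and t = ⌈(2w-d+1)/2⌉ with t ≥ 0. Then A_q(n,d,w) ≤ C(n,t)·(q-1)^t / C(w,t), where A_q(n,d,w) is the maximum size of a q-ary constant-weight code of length n, weight w, minimum Hamming distance d. -/
/-- `C` is a `q`-ary constant-weight code of length `n`, weight `w`,
and minimum Hamming distance `d`. -/
def isCode (q n d w : ℕ) (C : Finset (Fin n → ZMod q)) : Prop :=
  (∀ x ∈ C, hammingNorm x = w) ∧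
  ∀ x ∈ C, ∀ y ∈ C, x ≠ y → d ≤ hammingDist x y

/-- `A_q(n,d,w)`: the maximum size of a `q`-ary constant-weight code of
length `n`, weight `w`, and minimum Hamming distance `d`. -/
noncomputable def maxA (q n d w : ℕ) : ℕ :=
  sSup {m | ∃ C : Finset (Fin n → ZMod q), isCode q n d w C ∧ C.card = m}

/-!
Every word of weight `w` has `C(w,t)` restrictions to `t` of its nonzero positions, each a word
of weight `t`. Two codewords sharing such a restriction agree on a common `t`-subset of their
supports, so they are at distance at most `2(w-t) < d`; hence the restrictions of distinct
codewords are distinct, and `|C|·C(w,t)` is at most the number `C(n,t)(q-1)^t` of words of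
weight `t`.
-/

open Finset

section HammingSupport

variable {ι α : Type*} [Fintype ι] [Zero α] [DecidableEq α]

def hammingSupport (x : ι → α) : Finset ι := {i | x i ≠ 0}

@[simp]
theorem mem_hammingSupport {x : ι → α} {i : ι} : i ∈ hammingSupport x ↔ x i ≠ 0 := by
  simp [hammingSupport]

theorem card_hammingSupport (x : ι → α) : #(hammingSupport x) = hammingNorm x := rfl

theorem hammingSupport_piecewise_zero [DecidableEq ι] {x : ι → α} {s : Finset ι}
    (hs : s ⊆ hammingSupport x) :
    hammingSupport (s.piecewise x 0) = s := by
  ext i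
  by_cases hi : i ∈ s
  · simpa [hi] using hs hi
  · simp [hi]

theorem card_hammingSupport_eq_le [DecidableEq ι] [Fintype α] (s : Finset ι) :
    #{v : ι → α | hammingSupport v = s} ≤ (Fintype.card α - 1) ^ #s := by
  calc #{v : ι → α | hammingSupport v = s}
      ≤ #(Fintype.piFinset fun i => if i ∈ s then univ.erase (0 : α) else {0}) := by
        refine card_le_card fun v hv => Fintype.mem_piFinset.2 fun i => ?_
        have hi : i ∈ s ↔ v i ≠ 0 := (mem_filter.1 hv).2 ▸ mem_hammingSupport
        split_ifs with his <;> simp_all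
    _ = (Fintype.card α - 1) ^ #s := by
        simp only [Fintype.card_piFinset, apply_ite card, card_erase_of_mem (mem_univ _),
          card_univ, card_singleton]
        rw [Fintype.prod_ite_mem, prod_const]

theorem card_hammingNorm_eq_le [DecidableEq ι] [Fintype α] (t : ℕ) :
    #{v : ι → α | hammingNorm v = t} ≤
      (Fintype.card ι).choose t * (Fintype.card α - 1) ^ t := by
  calc #{v : ι → α | hammingNorm v = t}
      ≤ #((powersetCard t univ).biUnion fun s => {v : ι → α | hammingSupport v = s}) := by
        refine card_le_card fun v hv => ?_
        rw [mem_filter] at hv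
        exact mem_biUnion.2 ⟨hammingSupport v, mem_powersetCard.2 ⟨subset_univ _, hv.2⟩,
          mem_filter.2 ⟨mem_univ _, rfl⟩⟩
    _ ≤ ∑ s ∈ powersetCard t univ, #{v : ι → α | hammingSupport v = s} := card_biUnion_le
    _ ≤ ∑ s ∈ powersetCard t (univ : Finset ι), (Fintype.card α - 1) ^ t :=
        sum_le_sum fun s hs => (mem_powersetCard.1 hs).2 ▸ card_hammingSupport_eq_le s
    _ = (Fintype.card ι).choose t * (Fintype.card α - 1) ^ t := by
        rw [sum_const, card_powersetCard, card_univ, smul_eq_mul]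

theorem hammingDist_le_of_eqOn [DecidableEq ι] {x y : ι → α} {s : Finset ι}
    (hx : s ⊆ hammingSupport x) (hy : s ⊆ hammingSupport y) (hxy : ∀ i ∈ s, x i = y i) :
    hammingDist x y ≤ (hammingNorm x - #s) + (hammingNorm y - #s) := by
  have hsub :
      ({i | x i ≠ y i} : Finset ι) ⊆ hammingSupport x \ s ∪ hammingSupport y \ s := by
    intro i hi
    simp only [mem_filter, mem_univ, true_and] at hi
    simp only [mem_union, mem_sdiff, mem_hammingSupport]
    by_cases his : i ∈ s
    · exact absurd (hxy i his) hi
    · by_cases hx0 : x i = 0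
      · exact Or.inr ⟨fun hy0 => hi (hx0.trans hy0.symm), his⟩
      · exact Or.inl ⟨hx0, his⟩
  calc hammingDist x y ≤ #(hammingSupport x \ s ∪ hammingSupport y \ s) := card_le_card hsub
    _ ≤ #(hammingSupport x \ s) + #(hammingSupport y \ s) := card_union_le _ _
    _ = (hammingNorm x - #s) + (hammingNorm y - #s) := by
        rw [card_sdiff_of_subset hx, card_sdiff_of_subset hy, card_hammingSupport,
          card_hammingSupport]

end HammingSupport

section Subwords

variable {ι α : Type*} [Fintype ι] [DecidableEq ι] [Zero α] [DecidableEq α]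

def subwords (t : ℕ) (x : ι → α) : Finset (ι → α) :=
  (powersetCard t (hammingSupport x)).image fun s => s.piecewise x 0

theorem mem_subwords {t : ℕ} {x v : ι → α} :
    v ∈ subwords t x ↔ ∃ s ⊆ hammingSupport x, #s = t ∧ s.piecewise x 0 = v := by
  simp [subwords, mem_powersetCard, and_assoc]

theorem card_subwords (t : ℕ) (x : ι → α) : #(subwords t x) = (hammingNorm x).choose t := by
  rw [subwords, card_image_of_injOn, card_powersetCard, card_hammingSupport]
  intro s hs s' hs' h
  rw [← hammingSupport_piecewise_zero (mem_powersetCard.1 hs).1,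
    ← hammingSupport_piecewise_zero (mem_powersetCard.1 hs').1]
  exact congrArg hammingSupport h

theorem hammingNorm_of_mem_subwords {t : ℕ} {x v : ι → α} (hv : v ∈ subwords t x) :
    hammingNorm v = t := by
  obtain ⟨s, hs, rfl, rfl⟩ := mem_subwords.1 hv
  rw [← card_hammingSupport, hammingSupport_piecewise_zero hs]

theorem hammingDist_le_of_mem_subwords {t : ℕ} {x y v : ι → α} (hx : v ∈ subwords t x)
    (hy : v ∈ subwords t y) : hammingDist x y ≤ (hammingNorm x - t) + (hammingNorm y - t) := by
  obtain ⟨s, hs, rfl, rfl⟩ := mem_subwords.1 hx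
  obtain ⟨s', hs', -, hv⟩ := mem_subwords.1 hy
  obtain rfl : s' = s := by
    rw [← hammingSupport_piecewise_zero hs, ← hammingSupport_piecewise_zero hs', hv]
  refine hammingDist_le_of_eqOn hs hs' fun i hi => ?_
  simpa [piecewise_eq_of_mem _ _ _ hi] using congrFun hv i |>.symm

theorem card_mul_choose_le_card_hammingNorm_eq [Fintype α] (C : Finset (ι → α)) {w t : ℕ}
    (hw : ∀ x ∈ C, hammingNorm x = w)
    (hd : ∀ x ∈ C, ∀ y ∈ C, x ≠ y → 2 * (w - t) < hammingDist x y) :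
    #C * w.choose t ≤ #{v : ι → α | hammingNorm v = t} := by
  have hdisj : (C : Set (ι → α)).PairwiseDisjoint (subwords t) := by
    refine fun x hx y hy hxy => disjoint_left.2 fun v hvx hvy => ?_
    have := hammingDist_le_of_mem_subwords hvx hvy
    have := hd x hx y hy hxy
    rw [hw x hx, hw y hy] at *
    omega
  calc #C * w.choose t = ∑ x ∈ C, #(subwords t x) := by
        rw [sum_congr rfl fun x hx => by rw [card_subwords, hw x hx], sum_const, smul_eq_mul]
    _ = #(C.biUnion (subwords t)) := (card_biUnion hdisj).symm
    _ ≤ #{v : ι → α | hammingNorm v = t} := card_le_card <| biUnion_subset.2 fun x _ v hv =>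
        mem_filter.2 ⟨mem_univ _, hammingNorm_of_mem_subwords hv⟩

end Subwords

theorem exists_isCode_card_eq_maxA (q n d w : ℕ) [NeZero q] :
    ∃ C, isCode q n d w C ∧ #C = maxA q n d w := by
  refine Nat.sSup_mem (s := {m | ∃ C, isCode q n d w C ∧ #C = m})
    ⟨0, ∅, ⟨by simp, by simp⟩, rfl⟩ ⟨Fintype.card (Fin n → ZMod q), ?_⟩
  rintro m ⟨C, -, rfl⟩
  exact card_le_univ C

theorem stmt2_general (q n d w t : ℕ) (hq : 2 ≤ q) (hd : Odd d)
    (hdw : d ≤ 2 * w) (ht : t = (2 * w - d + 2) / 2) :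
    (maxA q n d w : ℚ) ≤
      ((Nat.choose n t * (q - 1) ^ t : ℕ) : ℚ) / ((Nat.choose w t : ℕ) : ℚ) := by
  have : NeZero q := ⟨by omega⟩
  obtain ⟨C, ⟨hCw, hCd⟩, hC⟩ := exists_isCode_card_eq_maxA q n d w
  obtain ⟨k, rfl⟩ := hd
  have hchoose : 0 < w.choose t := Nat.choose_pos (by omega)
  rw [← hC, le_div_iff₀ (by exact_mod_cast hchoose)]
  have hpack := card_mul_choose_le_card_hammingNorm_eq (t := t) C hCw
    fun x hx y hy hxy => lt_of_lt_of_le (by omega) (hCd x hx y hy hxy)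
  have hcount := card_hammingNorm_eq_le (ι := Fin n) (α := ZMod q) t
  rw [Fintype.card_fin, ZMod.card] at hcount
  exact_mod_cast hpack.trans hcount

/-- Johnson-type bound for odd distance: with `t = ⌈(2w-d+1)/2⌉`,
`A_q(n,d,w) ≤ C(n,t)(q-1)^t / C(w,t)`. -/
theorem stmt2 (q n d w t : ℕ) (hq : 2 ≤ q) (hw : w ≤ n) (hd : Odd d)
    (hdw : d ≤ 2 * w) (ht : t = (2 * w - d + 2) / 2) :
    (maxA q n d w : ℚ) ≤
      ((Nat.choose n t * (q - 1) ^ t : ℕ) : ℚ) / ((Nat.choose w t : ℕ) : ℚ) :=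
  stmt2_general q n d w t hq hd hdw ht
end

section
/- For all integers q ≥ 2 and 1 ≤ w ≤ n, A_q(n,2,w) = C(n,w)·(q-1)^{w-1}, where A_q(n,2,w) is the maximum size of a q-ary constant-weight code of length n, weight w, and minimum Hamming distance 2. -/
open Finset

section helpers
variable {q n : ℕ}

def supp (x : Fin n → ZMod q) : Finset (Fin n) := Finset.univ.filter (fun i => x i ≠ 0)

lemma hn_eq (x : Fin n → ZMod q) : hammingNorm x = (supp x).card := rfl

lemma mem_supp {x : Fin n → ZMod q} {i : Fin n} : i ∈ supp x ↔ x i ≠ 0 := by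
  simp [supp]

lemma supp_update_zero (x : Fin n → ZMod q) (j : Fin n) :
    supp (Function.update x j 0) = (supp x).erase j := by
  ext i
  rcases eq_or_ne i j with rfl | h
  · simp [mem_supp]
  · simp [mem_supp, h, Function.update_of_ne h]

lemma supp_update_ne (x : Fin n → ZMod q) (j : Fin n) {v : ZMod q} (hv : v ≠ 0) :
    supp (Function.update x j v) = insert j (supp x) := by
  ext i
  rcases eq_or_ne i j with rfl | h
  · simp [mem_supp, hv]
  · simp [mem_supp, h, Function.update_of_ne h]

lemma card_supp_eq [NeZero q] (hq : 2 ≤ q) (T : Finset (Fin n)) :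
    (Finset.univ.filter (fun z : Fin n → ZMod q => supp z = T)).card = (q-1)^T.card := by
  rw [← Fintype.card_subtype]
  have e : {z : Fin n → ZMod q // supp z = T} ≃ (T → {a : ZMod q // a ≠ 0}) :=
    { toFun := fun z i => ⟨z.1 i, by
        have := z.2; have : (i : Fin n) ∈ supp z.1 := by rw [this]; exact i.2
        exact mem_supp.1 this⟩
      invFun := fun f => ⟨fun i => if h : i ∈ T then (f ⟨i, h⟩).1 else 0, by
        ext i
        by_cases h : i ∈ T
        · simp [mem_supp, h, (f ⟨i, h⟩).2]
        · simp [mem_supp, h]⟩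
      left_inv := fun z => by
        ext i
        by_cases h : i ∈ supp z.1
        · simp [z.2 ▸ h]
        · have h0 : z.1 i = 0 := by simpa [mem_supp] using h
          simp [z.2 ▸ h, h0]
      right_inv := fun f => by
        ext i
        simp [i.2] }
  rw [Fintype.card_congr e, Fintype.card_fun]
  congr 1
  · have h1 : Fintype.card {a : ZMod q // ¬ a = 0} =
        Fintype.card (ZMod q) - Fintype.card {a : ZMod q // a = 0} :=
      Fintype.card_subtype_compl _
    simp only [h1, ZMod.card, Fintype.card_subtype_eq]
  · exact Fintype.card_coe T

end helpers

section main
variable {q n : ℕ} [NeZero q]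

def mi (hn : 0 < n) (S : Finset (Fin n)) : Fin n := S.min.getD ⟨0, hn⟩

lemma mi_mem (hn : 0 < n) {S : Finset (Fin n)} (hS : S.Nonempty) : mi hn S ∈ S := by
  have h := Finset.coe_min' hS
  have : mi hn S = S.min' hS := by rw [mi, ← h]; rfl
  rw [this]; exact S.min'_mem hS

/-- the counting target -/
def B (q : ℕ) [NeZero q] {n : ℕ} (hn : 0 < n) (w : ℕ) : Finset ((Finset (Fin n)) × (Fin n → ZMod q)) :=
  ((Finset.univ.powersetCard w) ×ˢ (Finset.univ : Finset (Fin n → ZMod q))).filter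
    (fun p => supp p.2 = p.1.erase (mi hn p.1))

lemma card_B (hq : 2 ≤ q) (hn : 0 < n) {w : ℕ} (hw : 1 ≤ w) :
    (B q hn w).card = Nat.choose n w * (q-1)^(w-1) := by
  classical
  have : B q hn w = ((Finset.univ.powersetCard w).sigma
      (fun S => Finset.univ.filter (fun z : Fin n → ZMod q => supp z = S.erase (mi hn S)))).map
      ⟨fun p => (p.1, p.2), by intro a b h; cases a; cases b; simpa using h⟩ := by
    ext ⟨S, z⟩
    simp only [B, Finset.mem_filter, Finset.mem_map, Finset.mem_sigma, Finset.mem_product,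
      Finset.mem_powersetCard_univ, Finset.mem_univ, and_true, true_and,
      Function.Embedding.coeFn_mk, Prod.mk.injEq]
    constructor
    · rintro ⟨h1, h2⟩; exact ⟨⟨S, z⟩, ⟨h1, h2⟩, rfl⟩
    · rintro ⟨⟨S', z'⟩, ⟨h2, h1⟩, h⟩
      injection h with h3 h4
      subst h3 h4
      exact ⟨h2, h1⟩
  rw [this, Finset.card_map, Finset.card_sigma]
  have hterm : ∀ S ∈ Finset.univ.powersetCard w,
      (Finset.univ.filter (fun z : Fin n → ZMod q => supp z = S.erase (mi hn S))).card
        = (q-1)^(w-1) := by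
    intro S hS
    rw [card_supp_eq hq]
    congr 1
    have hcard : S.card = w := (Finset.mem_powersetCard.1 hS).2
    have hne : S.Nonempty := Finset.card_pos.1 (by omega)
    rw [Finset.card_erase_of_mem (mi_mem hn hne), hcard]
  rw [Finset.sum_congr rfl hterm, Finset.sum_const, Finset.card_powersetCard,
    Finset.card_univ, Fintype.card_fin, smul_eq_mul]

/-- value map used for the parity-check construction -/
def gq (q : ℕ) (a : ZMod q) : ZMod (q-1) := ((ZMod.val a - 1 : ℕ) : ZMod (q-1))

lemma gq_inj (hq : 2 ≤ q) {a b : ZMod q} (ha : a ≠ 0) (hb : b ≠ 0) (h : gq q a = gq q b) :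
    a = b := by
  have : NeZero q := ⟨by omega⟩
  have h1 : NeZero (q-1) := ⟨by omega⟩
  have hva : a.val - 1 < q - 1 := by
    have := a.val_lt; have : a.val ≠ 0 := fun h => ha ((ZMod.val_eq_zero a).1 h); omega
  have hvb : b.val - 1 < q - 1 := by
    have := b.val_lt; have : b.val ≠ 0 := fun h => hb ((ZMod.val_eq_zero b).1 h); omega
  have := congrArg ZMod.val h
  rw [gq, gq, ZMod.val_cast_of_lt hva, ZMod.val_cast_of_lt hvb] at this
  have hva0 : a.val ≠ 0 := fun h => ha ((ZMod.val_eq_zero a).1 h)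
  have hvb0 : b.val ≠ 0 := fun h => hb ((ZMod.val_eq_zero b).1 h)
  exact ZMod.val_injective q (by omega)

lemma gq_surj (hq : 2 ≤ q) (c : ZMod (q-1)) : ∃ a : ZMod q, a ≠ 0 ∧ gq q a = c := by
  have : NeZero q := ⟨by omega⟩
  have h1 : NeZero (q-1) := ⟨by omega⟩
  refine ⟨((c.val + 1 : ℕ) : ZMod q), ?_, ?_⟩
  · have hlt : c.val + 1 < q := by have := c.val_lt; omega
    have : ((c.val + 1 : ℕ) : ZMod q).val = c.val + 1 := ZMod.val_cast_of_lt hlt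
    intro h0
    rw [h0] at this; simp [ZMod.val_zero] at this
  · have hlt : c.val + 1 < q := by have := c.val_lt; omega
    rw [gq, ZMod.val_cast_of_lt hlt]
    simp [ZMod.natCast_rightInverse c]

/-- the parity-check code -/
def C0 (q : ℕ) [NeZero q] (n w : ℕ) : Finset (Fin n → ZMod q) :=
  Finset.univ.filter (fun x => hammingNorm x = w ∧ ∑ i, gq q (x i) = 0)

lemma code_C0 (hq : 2 ≤ q) (w : ℕ) : isCode q n 2 w (C0 q n w) := by
  constructor
  · intro x hx; exact ((Finset.mem_filter.1 hx).2).1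
  · intro x hx y hy hxy
    by_contra hlt
    push_neg at hlt
    have hD : (Finset.univ.filter (fun i => x i ≠ y i)).card < 2 := hlt
    have hDne : (Finset.univ.filter (fun i => x i ≠ y i)).Nonempty := by
      obtain ⟨i, hi⟩ := Function.ne_iff.1 hxy
      exact ⟨i, by simp [hi]⟩
    obtain ⟨i0, hi0⟩ := Finset.card_eq_one.1 (le_antisymm (by omega) (Finset.card_pos.2 hDne))
    have hoff : ∀ j, j ≠ i0 → x j = y j := by
      intro j hj
      by_contra hne
      have : j ∈ Finset.univ.filter (fun i => x i ≠ y i) := by simp [hne]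
      rw [hi0] at this
      exact hj (Finset.mem_singleton.1 this)
    have hix : x i0 ≠ y i0 := by
      have : i0 ∈ Finset.univ.filter (fun i => x i ≠ y i) := by rw [hi0]; simp
      simpa using this
    have hwx := ((Finset.mem_filter.1 hx).2).1
    have hwy := ((Finset.mem_filter.1 hy).2).1
    have hsx := ((Finset.mem_filter.1 hx).2).2
    have hsy := ((Finset.mem_filter.1 hy).2).2
    -- zero iff zero at i0
    have hz : (x i0 = 0) ↔ (y i0 = 0) := by
      constructor
      · intro h0
        by_contra hy0
        have hss : supp x ⊂ supp y := by
          constructor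
          · intro i hi
            rcases eq_or_ne i i0 with rfl | hii
            · exact absurd (mem_supp.1 hi) (by simp [h0])
            · exact mem_supp.2 (hoff i hii ▸ mem_supp.1 hi)
          · intro hsub
            exact absurd (hsub (mem_supp.2 hy0)) (by simp [mem_supp, h0])
        have := Finset.card_lt_card hss
        rw [← hn_eq, ← hn_eq, hwx, hwy] at this
        omega
      · intro h0
        by_contra hx0
        have hss : supp y ⊂ supp x := by
          constructor
          · intro i hi
            rcases eq_or_ne i i0 with rfl | hii
            · exact absurd (mem_supp.1 hi) (by simp [h0])
            · exact mem_supp.2 ((hoff i hii).symm ▸ mem_supp.1 hi)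
          · intro hsub
            exact absurd (hsub (mem_supp.2 hx0)) (by simp [mem_supp, h0])
        have := Finset.card_lt_card hss
        rw [← hn_eq, ← hn_eq, hwx, hwy] at this
        omega
    -- sums agree off i0
    have hsum : gq q (x i0) = gq q (y i0) := by
      have h1 : gq q (x i0) + ∑ i ∈ Finset.univ.erase i0, gq q (x i) = 0 := by
        rw [Finset.add_sum_erase Finset.univ (fun i => gq q (x i)) (Finset.mem_univ i0)]
        exact hsx
      have h2 : gq q (y i0) + ∑ i ∈ Finset.univ.erase i0, gq q (y i) = 0 := by
        rw [Finset.add_sum_erase Finset.univ (fun i => gq q (y i)) (Finset.mem_univ i0)]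
        exact hsy
      have h3 : ∑ i ∈ Finset.univ.erase i0, gq q (x i)
          = ∑ i ∈ Finset.univ.erase i0, gq q (y i) := by
        refine Finset.sum_congr rfl (fun j hj => ?_)
        rw [hoff j (Finset.ne_of_mem_erase hj)]
      rw [h3] at h1
      have := h1.trans h2.symm
      exact add_right_cancel this
    rcases eq_or_ne (x i0) 0 with h0 | h0
    · exact hix (by rw [h0, (hz.1 h0)])
    · exact hix (gq_inj hq h0 (fun h => h0 (hz.2 h)) hsum)

lemma gq_zero (hq : 2 ≤ q) : gq q (0 : ZMod q) = 0 := by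
  have : NeZero q := ⟨by omega⟩
  simp [gq]

lemma dist_le_one_eq {x y : Fin n → ZMod q} {m : Fin n}
    (h : Function.update x m 0 = Function.update y m 0)
    (hd : ∀ x' ∈ (∅ : Finset (Fin n → ZMod q)), True) : True := trivial

lemma update_eq_off {x y : Fin n → ZMod q} {m : Fin n}
    (h : Function.update x m 0 = Function.update y m 0) :
    ∀ j, j ≠ m → x j = y j := by
  intro j hj
  have := congrFun h j
  rwa [Function.update_of_ne hj, Function.update_of_ne hj] at this

lemma card_le_of_code (hn : 0 < n) {w : ℕ} (hw : 1 ≤ w) {C : Finset (Fin n → ZMod q)}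
    (hC : isCode q n 2 w C) : C.card ≤ (B q hn w).card := by
  apply Finset.card_le_card_of_injOn
    (fun x => ((supp x : Finset (Fin n)), Function.update x (mi hn (supp x)) 0))
  · intro x hx
    have hwx : (supp x).card = w := (hn_eq x) ▸ hC.1 x hx
    have hne : (supp x).Nonempty := Finset.card_pos.1 (by omega)
    simp only [B, Finset.mem_coe, Finset.mem_filter, Finset.mem_product, Finset.mem_powersetCard_univ,
      Finset.mem_univ, and_true, true_and]
    exact ⟨hwx, supp_update_zero x _⟩
  · intro x hx y hy hxy
    simp only [Prod.mk.injEq] at hxy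
    obtain ⟨h1, h2⟩ := hxy
    rw [h1] at h2
    have hoff := update_eq_off h2
    by_contra hne
    have hd := hC.2 x hx y hy hne
    have : (Finset.univ.filter (fun i => x i ≠ y i)) ⊆ {mi hn (supp y)} := by
      intro j hj
      simp only [Finset.mem_filter] at hj
      by_contra hjm
      exact hj.2 (hoff j (by simpa using hjm))
    have := Finset.card_le_card this
    simp only [Finset.card_singleton] at this
    have : hammingDist x y ≤ 1 := this
    omega

lemma card_C0 (hq : 2 ≤ q) (hn : 0 < n) {w : ℕ} (hw : 1 ≤ w) :
    (C0 q n w).card = (B q hn w).card := by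
  apply Finset.card_bij
    (fun x _ => ((supp x : Finset (Fin n)), Function.update x (mi hn (supp x)) 0))
  · intro x hx
    have hwx : (supp x).card = w := (hn_eq x) ▸ ((Finset.mem_filter.1 hx).2).1
    simp only [B, Finset.mem_filter, Finset.mem_product, Finset.mem_powersetCard_univ,
      Finset.mem_univ, and_true, true_and]
    exact ⟨hwx, supp_update_zero x _⟩
  · intro x hx y hy hxy
    simp only [Prod.mk.injEq] at hxy
    obtain ⟨h1, h2⟩ := hxy
    rw [h1] at h2
    have hoff := update_eq_off h2
    by_contra hne
    have hd := (code_C0 hq w).2 x hx y hy hne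
    have hsub : (Finset.univ.filter (fun i => x i ≠ y i)) ⊆ {mi hn (supp y)} := by
      intro j hj
      simp only [Finset.mem_filter] at hj
      by_contra hjm
      exact hj.2 (hoff j (by simpa using hjm))
    have hcard := Finset.card_le_card hsub
    simp only [Finset.card_singleton] at hcard
    have : hammingDist x y ≤ 1 := hcard
    omega
  · rintro ⟨S, z⟩ hSz
    simp only [B, Finset.mem_filter, Finset.mem_product, Finset.mem_powersetCard_univ,
      Finset.mem_univ, and_true, true_and] at hSz
    obtain ⟨hScard, hzsupp⟩ := hSz
    set m := mi hn S with hm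
    have hSne : S.Nonempty := Finset.card_pos.1 (by omega)
    have hmS : m ∈ S := mi_mem hn hSne
    have hzm : z m = 0 := by
      by_contra h
      have : m ∈ supp z := mem_supp.2 h
      rw [hzsupp] at this
      exact (Finset.notMem_erase m S) this
    obtain ⟨v, hv0, hgv⟩ := gq_surj hq (- ∑ i, gq q (z i))
    refine ⟨Function.update z m v, ?_, ?_⟩
    · have hsupp : supp (Function.update z m v) = S := by
        rw [supp_update_ne z m hv0, hzsupp, Finset.insert_erase hmS]
      have hsum : ∑ i, gq q (Function.update z m v i) = 0 := by
        rw [← Finset.add_sum_erase Finset.univ (fun i => gq q (Function.update z m v i))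
          (Finset.mem_univ m)]
        have h1 : Function.update z m v m = v := Function.update_self m v z
        have h2 : ∑ i ∈ Finset.univ.erase m, gq q (Function.update z m v i)
            = ∑ i ∈ Finset.univ.erase m, gq q (z i) := by
          refine Finset.sum_congr rfl (fun j hj => ?_)
          rw [Function.update_of_ne (Finset.ne_of_mem_erase hj)]
        have h3 : ∑ i ∈ Finset.univ.erase m, gq q (z i) = ∑ i, gq q (z i) := by
          rw [← Finset.add_sum_erase Finset.univ (fun i => gq q (z i)) (Finset.mem_univ m),
            hzm, gq_zero hq, zero_add]
        rw [h1, h2, h3, hgv]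
        ring
      simp only [C0, Finset.mem_filter, Finset.mem_univ, true_and]
      exact ⟨by rw [hn_eq, hsupp, hScard], hsum⟩
    · have hsupp : supp (Function.update z m v) = S := by
        rw [supp_update_ne z m hv0, hzsupp, Finset.insert_erase hmS]
      simp only [Prod.mk.injEq]
      refine ⟨hsupp, ?_⟩
      rw [hsupp]
      funext j
      rcases eq_or_ne j m with rfl | hj
      · rw [Function.update_self, hzm]
      · rw [Function.update_of_ne hj, Function.update_of_ne hj]

end main

/-- `A_q(n,2,w) = C(n,w)·(q-1)^(w-1)`. -/
theorem stmt3 (q n w : ℕ) (hq : 2 ≤ q) (hw : 1 ≤ w) (hwn : w ≤ n) :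
    maxA q n 2 w = Nat.choose n w * (q - 1) ^ (w - 1) := by
  have hn : 0 < n := lt_of_lt_of_le hw hwn
  haveI : NeZero q := ⟨by omega⟩
  have hB := card_B (q := q) hq hn hw
  rw [maxA]
  apply IsGreatest.csSup_eq
  constructor
  · exact ⟨C0 q n w, code_C0 hq w, by rw [card_C0 hq hn hw, hB]⟩
  · rintro m ⟨C, hC, rfl⟩
    exact (card_le_of_code hn hw hC).trans_eq hB
end

section
/- For every integers q ≥ 2 and 3 ≤ w ≤ n, there exists a partition of the set H_q(n,w) of all words of length n over Z_q with exactly w nonzero coordinates into q-1 pairwise disjoint codes, each of which is an (n,2,w)_q-code of size C(n,w)·(q-1)^{w-1} (and hence optimal). -/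
open Finset Function

section aux
variable (q : ℕ) (hq : 2 ≤ q)

/-- map nonzero residues mod q to ZMod (q-1) -/
def vmap (a : ZMod q) : ZMod (q - 1) := ((a.val - 1 : ℕ) : ZMod (q - 1))

def imap (t : ZMod (q - 1)) : ZMod q := ((t.val + 1 : ℕ) : ZMod q)

variable {q}

lemma imap_val (hq : 2 ≤ q) (t : ZMod (q - 1)) : (imap q t).val = t.val + 1 := by
  haveI : NeZero q := ⟨by omega⟩
  haveI : NeZero (q - 1) := ⟨by omega⟩
  have h := t.val_lt
  rw [imap, ZMod.val_natCast, Nat.mod_eq_of_lt (by omega)]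

lemma imap_ne_zero (hq : 2 ≤ q) (t : ZMod (q - 1)) : imap q t ≠ 0 := by
  haveI : NeZero q := ⟨by omega⟩
  intro h
  have h2 := imap_val hq t
  rw [h, ZMod.val_zero] at h2
  exact Nat.succ_ne_zero _ h2.symm

lemma vmap_imap (hq : 2 ≤ q) (t : ZMod (q - 1)) : vmap q (imap q t) = t := by
  haveI : NeZero (q - 1) := ⟨by omega⟩
  rw [vmap, imap_val hq, Nat.add_sub_cancel, ZMod.natCast_val, ZMod.cast_id]

lemma imap_vmap (hq : 2 ≤ q) {a : ZMod q} (ha : a ≠ 0) : imap q (vmap q a) = a := by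
  haveI : NeZero q := ⟨by omega⟩
  haveI : NeZero (q - 1) := ⟨by omega⟩
  have h1 : a.val ≠ 0 := fun h => ha (by rwa [ZMod.val_eq_zero] at h)
  have h2 : a.val < q := a.val_lt
  rw [imap, vmap, ZMod.val_natCast, Nat.mod_eq_of_lt (by omega)]
  rw [Nat.sub_add_cancel (by omega), ZMod.natCast_val, ZMod.cast_id]

lemma vmap_injOn (hq : 2 ≤ q) {a b : ZMod q} (ha : a ≠ 0) (hb : b ≠ 0)
    (h : vmap q a = vmap q b) : a = b := by
  rw [← imap_vmap hq ha, ← imap_vmap hq hb, h]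

end aux

section main
variable {q n : ℕ}

def suppF (x : Fin n → ZMod q) : Finset (Fin n) := {j | x j ≠ 0}

def fsum (x : Fin n → ZMod q) : ZMod (q - 1) := ∑ j, vmap q (x j)

lemma mem_suppF {x : Fin n → ZMod q} {j : Fin n} : j ∈ suppF x ↔ x j ≠ 0 := by
  simp [suppF]

lemma hammingNorm_eq (x : Fin n → ZMod q) : hammingNorm x = (suppF x).card := rfl

lemma vmap_zero (hq : 2 ≤ q) : vmap q (0 : ZMod q) = 0 := by
  haveI : NeZero q := ⟨by omega⟩
  simp [vmap, ZMod.val_zero]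

lemma suppF_update_zero (x : Fin n → ZMod q) (s : Fin n) :
    suppF (update x s 0) = (suppF x).erase s := by
  ext j
  by_cases h : j = s <;> simp [mem_suppF, Finset.mem_erase, h, update]

lemma suppF_update_ne (x : Fin n → ZMod q) (s : Fin n) {a : ZMod q} (ha : a ≠ 0) :
    suppF (update x s a) = insert s (suppF x) := by
  ext j
  by_cases h : j = s <;> simp [mem_suppF, Finset.mem_insert, h, update, ha]

lemma fsum_update (x : Fin n → ZMod q) (s : Fin n) (a : ZMod q) :
    fsum (update x s a) = fsum x - vmap q (x s) + vmap q a := by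
  have h1 : ∀ j, vmap q (update x s a j) = update (fun j => vmap q (x j)) s (vmap q a) j := by
    intro j
    by_cases h : j = s <;> simp [h, update]
  rw [fsum, Finset.sum_congr rfl (fun j _ => h1 j)]
  rw [Finset.sum_update_of_mem (Finset.mem_univ s)]
  have h2 : fsum x = vmap q (x s) + ∑ j ∈ Finset.univ.erase s, vmap q (x j) := by
    rw [fsum, ← Finset.add_sum_erase _ _ (Finset.mem_univ s)]
  rw [h2, Finset.erase_eq]
  ring

end main

section main2
variable {q n : ℕ}

lemma dist_ge_two (hq : 2 ≤ q) {x y : Fin n → ZMod q}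
    (hnx : 0 < hammingNorm x) (hnorm : hammingNorm x = hammingNorm y)
    (hf : fsum x = fsum y) (hxy : x ≠ y) : 2 ≤ hammingDist x y := by
  by_contra h
  push_neg at h
  interval_cases hd : hammingDist x y
  · exact hxy (hammingDist_eq_zero.mp hd)
  · -- distance 1 : exactly one differing coordinate
    obtain ⟨j, hj⟩ := Finset.card_eq_one.mp hd
    have hje : ∀ k, x k ≠ y k ↔ k = j := by
      intro k
      constructor
      · intro hk
        have : k ∈ ({i | x i ≠ y i} : Finset (Fin n)) := by simpa using hk
        rw [hj] at this; simpa using this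
      · rintro rfl
        have : k ∈ ({i | x i ≠ y i} : Finset (Fin n)) := by rw [hj]; simp
        simpa using this
    have hxj : x j ≠ y j := (hje j).mpr rfl
    have hkeq : ∀ k, k ≠ j → x k = y k := fun k hk => by
      by_contra hne; exact hk ((hje k).mp hne)
    -- supports agree away from j
    have hsupp_erase : (suppF x).erase j = (suppF y).erase j := by
      ext k
      simp only [Finset.mem_erase, mem_suppF]
      constructor
      · rintro ⟨hkj, hk'⟩; exact ⟨hkj, by rw [← hkeq k hkj]; exact hk'⟩
      · rintro ⟨hkj, hk'⟩; exact ⟨hkj, by rw [hkeq k hkj]; exact hk'⟩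
    -- both x j, y j nonzero
    have hxj0 : x j ≠ 0 := by
      intro h0
      have hyj : y j ≠ 0 := fun h1 => hxj (by rw [h0, h1])
      have hjx : j ∉ suppF x := by simp [mem_suppF, h0]
      have hjy : j ∈ suppF y := mem_suppF.mpr hyj
      have : (suppF x) = (suppF y).erase j := by
        rw [← hsupp_erase, Finset.erase_eq_of_notMem hjx]
      have hcard := Finset.card_erase_of_mem hjy
      rw [← this, ← hammingNorm_eq, ← hammingNorm_eq, ← hnorm] at hcard
      omega
    have hyj0 : y j ≠ 0 := by
      intro h0
      have hjy : j ∉ suppF y := by simp [mem_suppF, h0]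
      have hjx : j ∈ suppF x := mem_suppF.mpr (fun h1 => hxj (by rw [h0, h1]))
      have : (suppF y) = (suppF x).erase j := by
        rw [hsupp_erase, Finset.erase_eq_of_notMem hjy]
      have hcard := Finset.card_erase_of_mem hjx
      rw [← this, ← hammingNorm_eq, ← hammingNorm_eq, ← hnorm] at hcard
      omega
    -- sums away from j agree, so vmap equal
    have hsum : vmap q (x j) = vmap q (y j) := by
      have e1 : fsum x = vmap q (x j) + ∑ k ∈ Finset.univ.erase j, vmap q (x k) := by
        rw [fsum, ← Finset.add_sum_erase _ _ (Finset.mem_univ j)]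
      have e2 : fsum y = vmap q (y j) + ∑ k ∈ Finset.univ.erase j, vmap q (y k) := by
        rw [fsum, ← Finset.add_sum_erase _ _ (Finset.mem_univ j)]
      have e3 : ∑ k ∈ Finset.univ.erase j, vmap q (x k)
          = ∑ k ∈ Finset.univ.erase j, vmap q (y k) := by
        apply Finset.sum_congr rfl
        intro k hk
        rw [hkeq k (Finset.mem_erase.mp hk).1]
      rw [e1, e2, e3] at hf
      exact add_right_cancel hf
    exact hxj (vmap_injOn hq hxj0 hyj0 hsum)

end main2

section count
variable {q n : ℕ} [NeZero q]

lemma card_fixed_supp (hq : 2 ≤ q) (S : Finset (Fin n)) :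
    (Finset.univ.filter fun x : Fin n → ZMod q => suppF x = S).card = (q - 1) ^ S.card := by
  have e : {x : Fin n → ZMod q // suppF x = S} ≃ (S → {a : ZMod q // a ≠ 0}) := by
    refine ⟨fun x s => ⟨x.1 s, mem_suppF.mp (by rw [x.2]; exact s.2)⟩,
      fun g => ⟨fun j => if h : j ∈ S then (g ⟨j, h⟩).1 else 0, ?_⟩, ?_, ?_⟩
    · ext j
      simp only [mem_suppF]
      by_cases h : j ∈ S
      · simp only [dif_pos h]
        exact iff_of_true (g ⟨j, h⟩).2 h
      · simp only [dif_neg h]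
        exact iff_of_false (by simp) h
    · rintro ⟨x, hx⟩
      ext j
      simp only
      by_cases h : j ∈ S
      · simp [dif_pos h]
      · rw [dif_neg h]
        have h1 : j ∉ suppF x := by rw [hx]; exact h
        have h2 : x j = 0 := by by_contra hc; exact h1 (mem_suppF.mpr hc)
        exact h2.symm
    · intro g
      funext s
      apply Subtype.ext
      simp [s.2]
  calc (Finset.univ.filter fun x : Fin n → ZMod q => suppF x = S).card
      = Fintype.card {x : Fin n → ZMod q // suppF x = S} := (Fintype.card_subtype _).symm
    _ = Fintype.card (S → {a : ZMod q // a ≠ 0}) := Fintype.card_congr e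
    _ = Fintype.card {a : ZMod q // a ≠ 0} ^ S.card := by
        rw [Fintype.card_fun, Fintype.card_coe]
    _ = (q - 1) ^ S.card := by
        congr 1
        have h1 : Fintype.card {a : ZMod q // ¬ a = 0}
            = Fintype.card (ZMod q) - Fintype.card {a : ZMod q // a = 0} :=
          Fintype.card_subtype_compl _
        rw [h1, ZMod.card, Fintype.card_subtype_eq]

lemma card_supp_fsum (hq : 2 ≤ q) {w : ℕ} (hw : 0 < w) (S : Finset (Fin n))
    (hS : S.card = w) (c : ZMod (q - 1)) :
    (Finset.univ.filter fun x : Fin n → ZMod q => suppF x = S ∧ fsum x = c).card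
      = (q - 1) ^ (w - 1) := by
  have hSne : S.Nonempty := Finset.card_pos.mp (hS ▸ hw)
  set s0 := S.min' hSne with hs0
  have hs0S : s0 ∈ S := S.min'_mem hSne
  have key : (Finset.univ.filter fun x : Fin n → ZMod q => suppF x = S ∧ fsum x = c).card
      = (Finset.univ.filter fun y : Fin n → ZMod q => suppF y = S.erase s0).card := by
    apply Finset.card_bij' (fun x _ => update x s0 0)
      (fun y _ => update y s0 (imap q (c - fsum y)))
    · intro x hx
      rw [Finset.mem_filter] at hx ⊢
      obtain ⟨-, hx1, hx2⟩ := hx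
      exact ⟨Finset.mem_univ _, by rw [suppF_update_zero, hx1]⟩
    · intro y hy
      rw [Finset.mem_filter] at hy ⊢
      obtain ⟨-, hy1⟩ := hy
      have hy0 : y s0 = 0 := by
        by_contra h0
        have : s0 ∈ suppF y := mem_suppF.mpr h0
        rw [hy1] at this
        exact (Finset.mem_erase.mp this).1 rfl
      refine ⟨Finset.mem_univ _, ?_, ?_⟩
      · rw [suppF_update_ne _ _ (imap_ne_zero hq _), hy1, Finset.insert_erase hs0S]
      · rw [fsum_update, hy0, vmap_zero hq, vmap_imap hq]
        ring
    · intro x hx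
      rw [Finset.mem_filter] at hx
      obtain ⟨-, hx1, hx2⟩ := hx
      have hx0 : x s0 ≠ 0 := mem_suppF.mp (hx1 ▸ hs0S)
      have h3 : fsum (update x s0 0) = c - vmap q (x s0) := by
        rw [fsum_update, hx2, vmap_zero hq]; ring
      rw [h3]
      have h4 : c - (c - vmap q (x s0)) = vmap q (x s0) := by ring
      rw [h4, imap_vmap hq hx0, update_idem, update_eq_self]
    · intro y hy
      rw [Finset.mem_filter] at hy
      obtain ⟨-, hy1⟩ := hy
      have hy0 : y s0 = 0 := by
        by_contra h0
        have : s0 ∈ suppF y := mem_suppF.mpr h0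
        rw [hy1] at this
        exact (Finset.mem_erase.mp this).1 rfl
      rw [update_idem, ← hy0, update_eq_self]
  rw [key, card_fixed_supp hq, Finset.card_erase_of_mem hs0S, hS]

end count

/-- Tiling `TOC_q(n,2,w)`: the set `H_q(n,w)` of all weight-`w` words of length `n`
over `Z_q` can be partitioned into `q-1` pairwise disjoint optimal
`(n,2,w)_q`-codes, each of size `C(n,w)·(q-1)^(w-1)`. -/

theorem stmt5 (q n w : ℕ) (hq : 2 ≤ q) (hw : 3 ≤ w) (hwn : w ≤ n) :
    ∃ P : Fin (q - 1) → Finset (Fin n → ZMod q),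
      (∀ i, isCode q n 2 w (P i) ∧
        (P i).card = Nat.choose n w * (q - 1) ^ (w - 1)) ∧
      (∀ i j, i ≠ j → Disjoint (P i) (P j)) ∧
      ∀ x : Fin n → ZMod q, hammingNorm x = w → ∃ i, x ∈ P i := by
  haveI : NeZero q := ⟨by omega⟩
  haveI : NeZero (q - 1) := ⟨by omega⟩
  refine ⟨fun i => Finset.univ.filter
      fun x => hammingNorm x = w ∧ fsum x = (((i : ℕ) : ZMod (q - 1))), ?_, ?_, ?_⟩
  · intro i
    set c : ZMod (q - 1) := ((i : ℕ) : ZMod (q - 1)) with hc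
    constructor
    · constructor
      · intro x hx
        exact ((Finset.mem_filter.mp hx).2).1
      · intro x hx y hy hxy
        obtain ⟨-, hx1, hx2⟩ := Finset.mem_filter.mp hx
        obtain ⟨-, hy1, hy2⟩ := Finset.mem_filter.mp hy
        exact dist_ge_two hq (by omega) (hx1.trans hy1.symm) (hx2.trans hy2.symm) hxy
    · have hsplit : (Finset.univ.filter
          fun x : Fin n → ZMod q => hammingNorm x = w ∧ fsum x = c)
          = (Finset.univ.powersetCard w).biUnion
            (fun S => Finset.univ.filter fun x => suppF x = S ∧ fsum x = c) := by
        ext x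
        rw [Finset.mem_filter, Finset.mem_biUnion]
        simp only [Finset.mem_filter, Finset.mem_biUnion, Finset.mem_powersetCard_univ,
          Finset.mem_univ, true_and, hammingNorm_eq]
        constructor
        · rintro ⟨h1, h2⟩
          exact ⟨suppF x, h1, rfl, h2⟩
        · rintro ⟨S, hS, h1, h2⟩
          exact ⟨by rw [h1, hS], h2⟩
      show (Finset.univ.filter
          fun x : Fin n → ZMod q => hammingNorm x = w ∧ fsum x = c).card
          = Nat.choose n w * (q - 1) ^ (w - 1)
      rw [hsplit, Finset.card_biUnion]
      · rw [Finset.sum_congr rfl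
          (fun S hS => card_supp_fsum hq (by omega) S
            (Finset.mem_powersetCard_univ.mp hS) c)]
        rw [Finset.sum_const, Finset.card_powersetCard, Finset.card_univ, Fintype.card_fin,
          smul_eq_mul]
      · intro S hS T hT hST
        rw [Function.onFun, Finset.disjoint_left]
        intro x hxS hxT
        obtain ⟨-, h1, -⟩ := Finset.mem_filter.mp hxS
        obtain ⟨-, h2, -⟩ := Finset.mem_filter.mp hxT
        exact hST (h1 ▸ h2)
  · intro i j hij
    rw [Finset.disjoint_left]
    intro x hxi hxj
    obtain ⟨-, -, h1⟩ := Finset.mem_filter.mp hxi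
    obtain ⟨-, -, h2⟩ := Finset.mem_filter.mp hxj
    apply hij
    have h3 : (((i : ℕ) : ZMod (q - 1))) = (((j : ℕ) : ZMod (q - 1))) := by
      rw [← h1, ← h2]
    have h4 := congrArg ZMod.val h3
    rw [ZMod.val_natCast, ZMod.val_natCast, Nat.mod_eq_of_lt i.2, Nat.mod_eq_of_lt j.2] at h4
    exact Fin.ext h4
  · intro x hx
    refine ⟨⟨(fsum x).val, ZMod.val_lt _⟩, ?_⟩
    rw [Finset.mem_filter]
    refine ⟨Finset.mem_univ _, hx, ?_⟩
    simp [ZMod.natCast_val, ZMod.cast_id]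
end

section
/- Let q ≥ 2 and 1 ≤ w ≤ n. There exists a partition of the set H_q(n,w) of all weight-w words in Z_q^n into pairwise disjoint codes, each consisting of ⌊n/w⌋ words with pairwise disjoint supports (i.e., optimal (n,2w,w)_q-codes), if and only if ⌊n/w⌋ divides (q-1)^w · C(n,w). -/
open Finset

namespace Stmt6Aux

def pre (n i : ℕ) : Finset (Fin n) := Finset.univ.filter (fun v => (v : ℕ) < i)

lemma mem_pre {n i : ℕ} {v : Fin n} : v ∈ pre n i ↔ (v : ℕ) < i := by
  simp [pre]

lemma card_pre {n : ℕ} (i : ℕ) (h : i ≤ n) : (pre n i).card = i := by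
  classical
  have himg : (pre n i).image (fun v : Fin n => (v : ℕ)) = Finset.range i := by
    ext x
    simp only [mem_image, mem_pre, Finset.mem_range]
    constructor
    · rintro ⟨v, hv, rfl⟩; exact hv
    · intro hx
      exact ⟨⟨x, lt_of_lt_of_le hx h⟩, hx, rfl⟩
  have := Finset.card_image_of_injective (pre n i) (Fin.val_injective)
  rw [himg, Finset.card_range] at this
  exact this.symm

/-- The invariant maintained in the Baranyai-style induction.
`A j b` is block `b` of class `j`; blocks `Fin.castSucc b` (for `b : Fin k`)
are the `w`-blocks, block `Fin.last k` is the garbage block of size `≤ r`. -/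
structure St (n w k r lam N i : ℕ) (A : Fin N → Fin (k+1) → Finset (Fin n)) : Prop where
  disj : ∀ j, ∀ b b', b ≠ b' → Disjoint (A j b) (A j b')
  cover : ∀ (j : Fin N) (v : Fin n), ((v : ℕ) < i ↔ ∃ b, v ∈ A j b)
  cardW : ∀ j (b : Fin k), (A j b.castSucc).card ≤ w
  cardG : ∀ j, (A j (Fin.last k)).card ≤ r
  count : ∀ S : Finset (Fin n), S.card ≤ w → S ⊆ pre n i →
    (Finset.univ.filter (fun p : Fin N × Fin k => A p.1 p.2.castSucc = S)).card
      = lam * Nat.choose (n - i) (w - S.card)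

lemma base (n w k r lam N : ℕ) (hNk : N * k = lam * Nat.choose n w) :
    St n w k r lam N 0 (fun _ _ => (∅ : Finset (Fin n))) := by
  classical
  refine ⟨?_, ?_, ?_, ?_, ?_⟩
  · intro j b b' _; simp
  · intro j v; simp
  · intro j b; simp
  · intro j; simp
  · intro S hS hS0
    have hSempty : S = ∅ := by
      rw [Finset.eq_empty_iff_forall_notMem]
      intro v hv
      have := hS0 hv
      rw [mem_pre] at this
      omega
    subst hSempty
    simp only [Finset.card_empty, Nat.sub_zero]
    rw [Finset.filter_true_of_mem (by intro p _; simp)]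
    simpa using hNk


section
variable {n w k r lam N i : ℕ} {A : Fin N → Fin (k+1) → Finset (Fin n)}

lemma blocks_sum (h : St n w k r lam N i A) (hi : i ≤ n) (j : Fin N) :
    ∑ b : Fin (k+1), (A j b).card = i := by
  classical
  have hU : Finset.univ.biUnion (A j) = pre n i := by
    ext v
    simp only [Finset.mem_biUnion, mem_pre, Finset.mem_univ, true_and]
    exact ⟨fun ⟨b, hb⟩ => (h.cover j v).mpr ⟨b, hb⟩, fun hv => (h.cover j v).mp hv⟩
  have := Finset.card_biUnion (s := (Finset.univ : Finset (Fin (k+1)))) (t := A j)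
    (fun b _ b' _ hbb => h.disj j b b' hbb)
  rw [hU, card_pre i hi] at this
  exact this.symm

lemma class_slack (h : St n w k r lam N i A) (hi : i ≤ n) (hn : k * w + r = n) (j : Fin N) :
    (∑ b : Fin k, (w - (A j b.castSucc).card)) + (r - (A j (Fin.last k)).card) = n - i := by
  classical
  have hsum : (∑ b : Fin k, (A j b.castSucc).card) + (A j (Fin.last k)).card = i := by
    have := blocks_sum h hi j
    rwa [Fin.sum_univ_castSucc] at this
  have h1 : (∑ b : Fin k, (w - (A j b.castSucc).card))
      = k * w - ∑ b : Fin k, (A j b.castSucc).card := by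
    rw [Finset.sum_tsub_distrib _ (fun b _ => h.cardW j b)]
    simp [mul_comm]
  have h2 : (∑ b : Fin k, (A j b.castSucc).card) ≤ k * w := by
    calc (∑ b : Fin k, (A j b.castSucc).card) ≤ ∑ _b : Fin k, w :=
          Finset.sum_le_sum (fun b _ => h.cardW j b)
      _ = k * w := by simp [mul_comm]
  have h3 := h.cardG j
  omega

end

section
variable {n w k r lam N i : ℕ}

/-- slots (class, w-block index) whose current block equals `S`. -/
def slotsEq (A : Fin N → Fin (k+1) → Finset (Fin n)) (S : Finset (Fin n)) :
    Finset (Fin N × Fin k) :=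
  Finset.univ.filter (fun p : Fin N × Fin k => A p.1 p.2.castSucc = S)

/-- possible partial `w`-block values that can still grow. -/
def scal (n w i : ℕ) : Finset (Finset (Fin n)) :=
  (pre n i).powerset.filter (fun S => S.card < w)

/-- demand: number of classes whose chosen block at step `i` must equal `S`. -/
def dem (n w lam i : ℕ) (S : Finset (Fin n)) : ℕ :=
  lam * Nat.choose (n - i - 1) (w - S.card - 1)

variable {A : Fin N → Fin (k+1) → Finset (Fin n)}

lemma block_sub (h : St n w k r lam N i A) (j : Fin N) (b : Fin (k+1)) :
    A j b ⊆ pre n i := by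
  intro v hv
  exact mem_pre.mpr ((h.cover j v).mpr ⟨b, hv⟩)

lemma dem_mul (h : St n w k r lam N i A) (hi : i < n) {S : Finset (Fin n)}
    (hS : S ∈ scal n w i) :
    dem n w lam i S * (n - i) = (slotsEq A S).card * (w - S.card) := by
  classical
  rw [scal, Finset.mem_filter, Finset.mem_powerset] at hS
  have hcnt : (slotsEq A S).card = lam * Nat.choose (n - i) (w - S.card) :=
    h.count S (le_of_lt hS.2) hS.1
  rw [hcnt]
  have hm : 1 ≤ n - i := by omega
  have ht : 1 ≤ w - S.card := by omega
  have := Nat.add_one_mul_choose_eq (n - i - 1) (w - S.card - 1)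
  have e1 : n - i - 1 + 1 = n - i := by omega
  have e2 : w - S.card - 1 + 1 = w - S.card := by omega
  rw [e1, e2] at this
  -- this : (n - i) * Nat.choose (n-i-1) (w - S.card - 1) = Nat.choose (n-i) (w-S.card) * (w - S.card)
  unfold dem
  calc lam * Nat.choose (n - i - 1) (w - S.card - 1) * (n - i)
      = lam * ((n - i) * Nat.choose (n - i - 1) (w - S.card - 1)) := by ring
    _ = lam * (Nat.choose (n - i) (w - S.card) * (w - S.card)) := by rw [this]
    _ = lam * Nat.choose (n - i) (w - S.card) * (w - S.card) := by ring

lemma slot_sum_eq (h : St n w k r lam N i A) {𝒯 : Finset (Finset (Fin n))}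
    (h𝒯 : 𝒯 ⊆ scal n w i) :
    ∑ S ∈ 𝒯, (slotsEq A S).card * (w - S.card)
      = ∑ p ∈ Finset.univ.filter
          (fun p : Fin N × Fin k => A p.1 p.2.castSucc ∈ 𝒯),
          (w - (A p.1 p.2.castSucc).card) := by
  classical
  rw [← Finset.sum_fiberwise_of_maps_to
    (s := Finset.univ.filter (fun p : Fin N × Fin k => A p.1 p.2.castSucc ∈ 𝒯))
    (t := 𝒯) (g := fun p : Fin N × Fin k => A p.1 p.2.castSucc)
    (fun p hp => (Finset.mem_filter.mp hp).2)
    (fun p : Fin N × Fin k => w - (A p.1 p.2.castSucc).card)]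
  refine Finset.sum_congr rfl (fun S hS => ?_)
  have hfil : (Finset.univ.filter (fun p : Fin N × Fin k => A p.1 p.2.castSucc ∈ 𝒯)).filter
      (fun p => A p.1 p.2.castSucc = S) = slotsEq A S := by
    ext p
    simp only [Finset.mem_filter, Finset.mem_univ, true_and, slotsEq]
    constructor
    · rintro ⟨_, h2⟩; exact h2
    · intro h2; exact ⟨h2 ▸ hS, h2⟩
  rw [hfil]
  have hinner : ∑ p ∈ slotsEq A S, (w - (A p.1 p.2.castSucc).card)
      = ∑ _p ∈ slotsEq A S, (w - S.card) := by
    refine Finset.sum_congr rfl (fun p hp => ?_)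
    rw [slotsEq, Finset.mem_filter] at hp
    rw [hp.2]
  rw [hinner, Finset.sum_const, smul_eq_mul, mul_comm]

lemma global_ident (h : St n w k r lam N i A) (hi : i < n) (hn : k * w + r = n) :
    (∑ S ∈ scal n w i, dem n w lam i S) * (n - i)
      + (∑ j : Fin N, (r - (A j (Fin.last k)).card)) = N * (n - i) := by
  classical
  rw [Finset.sum_mul]
  have e1 : ∀ S ∈ scal n w i, dem n w lam i S * (n - i)
      = (slotsEq A S).card * (w - S.card) := fun S hS => dem_mul h hi hS
  rw [Finset.sum_congr rfl e1]
  rw [slot_sum_eq h (Finset.Subset.refl _)]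
  have hfull : (Finset.univ.filter
      (fun p : Fin N × Fin k => A p.1 p.2.castSucc ∈ scal n w i)) =
      Finset.univ.filter (fun p : Fin N × Fin k => (A p.1 p.2.castSucc).card < w) := by
    ext p
    simp only [Finset.mem_filter, Finset.mem_univ, true_and]
    constructor
    · intro hp; rw [scal, Finset.mem_filter] at hp; exact hp.2
    · intro hp
      rw [scal, Finset.mem_filter, Finset.mem_powerset]
      exact ⟨block_sub h _ _, hp⟩
  rw [hfull]
  have e2 : ∑ p ∈ Finset.univ.filter
      (fun p : Fin N × Fin k => (A p.1 p.2.castSucc).card < w),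
      (w - (A p.1 p.2.castSucc).card)
      = ∑ p : Fin N × Fin k, (w - (A p.1 p.2.castSucc).card) := by
    rw [Finset.sum_filter]
    refine Finset.sum_congr rfl (fun p _ => ?_)
    by_cases hc : (A p.1 p.2.castSucc).card < w
    · simp [hc]
    · have : w - (A p.1 p.2.castSucc).card = 0 := by omega
      simp [hc, this]
  rw [e2, Fintype.sum_prod_type]
  rw [← Finset.sum_add_distrib]
  have e3 : ∀ j : Fin N,
      (∑ b : Fin k, (w - (A j b.castSucc).card)) + (r - (A j (Fin.last k)).card) = n - i :=
    class_slack h (le_of_lt hi) hn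
  rw [Finset.sum_congr rfl (fun j _ => e3 j)]
  simp [mul_comm]

end

section
variable {n w k r lam N i : ℕ}

/-- the tokens: `dem S` tokens of type `some S` for each `S ∈ scal`, and `g` garbage tokens. -/
def tokens (n w lam i g : ℕ) : Finset (Option (Finset (Fin n)) × ℕ) :=
  ((scal n w i).biUnion
    (fun S => (Finset.range (dem n w lam i S)).image (fun t => (some S, t))))
  ∪ ((Finset.range g).image (fun t => ((none : Option (Finset (Fin n))), t)))

lemma mem_tokens {g : ℕ} {p : Option (Finset (Fin n)) × ℕ} :
    p ∈ tokens n w lam i g ↔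
      (∃ S ∈ scal n w i, ∃ t < dem n w lam i S, p = (some S, t)) ∨
      (∃ t < g, p = ((none : Option (Finset (Fin n))), t)) := by
  classical
  simp only [tokens, Finset.mem_union, Finset.mem_biUnion, Finset.mem_image,
    Finset.mem_range]
  constructor
  · rintro (⟨S, hS, t, ht, rfl⟩ | ⟨t, ht, rfl⟩)
    · exact Or.inl ⟨S, hS, t, ht, rfl⟩
    · exact Or.inr ⟨t, ht, rfl⟩
  · rintro (⟨S, hS, t, ht, rfl⟩ | ⟨t, ht, rfl⟩)
    · exact Or.inl ⟨S, hS, t, ht, rfl⟩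
    · exact Or.inr ⟨t, ht, rfl⟩

lemma card_tokens (g : ℕ) :
    (tokens n w lam i g : Finset (Option (Finset (Fin n)) × ℕ)).card
      = (∑ S ∈ scal n w i, dem n w lam i S) + g := by
  classical
  rw [tokens, Finset.card_union_of_disjoint, Finset.card_biUnion, Finset.card_image_of_injective,
    Finset.card_range]
  · refine congrArg (· + g) (Finset.sum_congr rfl (fun S _ => ?_))
    rw [Finset.card_image_of_injective, Finset.card_range]
    intro a b hab; simpa using hab
  · intro a b hab; simpa using hab
  · intro S _ S' _ hSS'
    simp only [Function.onFun, Finset.disjoint_left, Finset.mem_image, Finset.mem_range]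
    rintro p ⟨t, _, rfl⟩ ⟨t', _, hp⟩
    have h1 : (some S' : Option (Finset (Fin n))) = some S := (Prod.ext_iff.mp hp).1
    exact hSS' (Option.some.inj h1).symm
  · simp only [Finset.disjoint_left, Finset.mem_biUnion, Finset.mem_image, Finset.mem_range]
    rintro p ⟨S, _, t, _, rfl⟩ ⟨t', _, hp⟩
    exact absurd (Prod.ext_iff.mp hp).1 (by simp)

/-- neighborhoods for Hall's theorem. -/
def nb (r : ℕ) (A : Fin N → Fin (k+1) → Finset (Fin n))
    (x : Option (Finset (Fin n)) × ℕ) : Finset (Fin N) :=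
  match x.1 with
  | some S => Finset.univ.filter (fun j => ∃ b : Fin k, A j b.castSucc = S)
  | none => Finset.univ.filter (fun j => (A j (Fin.last k)).card < r)

lemma nb_some {r : ℕ} {A : Fin N → Fin (k+1) → Finset (Fin n)} {S : Finset (Fin n)} {t : ℕ} :
    nb r A (some S, t) = Finset.univ.filter (fun j => ∃ b : Fin k, A j b.castSucc = S) := rfl

lemma nb_none {r : ℕ} {A : Fin N → Fin (k+1) → Finset (Fin n)} {t : ℕ} :
    nb r A ((none : Option (Finset (Fin n))), t)
      = Finset.univ.filter (fun j => (A j (Fin.last k)).card < r) := rfl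

variable {A : Fin N → Fin (k+1) → Finset (Fin n)} {g : ℕ}

lemma hall_cond (h : St n w k r lam N i A) (hi : i < n) (hn : k * w + r = n)
    (hgm : g * (n - i) = ∑ j : Fin N, (r - (A j (Fin.last k)).card))
    (s : Finset {x // x ∈ tokens n w lam i g}) :
    s.card ≤ (s.biUnion (fun x => nb r A x.1)).card := by
  classical
  set u := s.image Subtype.val with hu
  set Ns := s.biUnion (fun x => nb r A x.1) with hNs
  have hucard : u.card = s.card := Finset.card_image_of_injective _ Subtype.val_injective
  have hnbNs : ∀ p ∈ u, nb r A p ⊆ Ns := by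
    intro p hp
    rw [hu, Finset.mem_image] at hp
    obtain ⟨x, hx, rfl⟩ := hp
    exact Finset.subset_biUnion_of_mem (fun x => nb r A x.1) hx
  set 𝒯 := (scal n w i).filter (fun S => ∃ p ∈ u, p.1 = some S) with h𝒯
  have h𝒯sub : 𝒯 ⊆ scal n w i := Finset.filter_subset _ _
  set hasG := ∃ p ∈ u, p.1 = (none : Option (Finset (Fin n))) with hhasG
  -- Step A : u.card is at most the total demand of present types
  have stepA : u.card ≤ (∑ S ∈ 𝒯, dem n w lam i S) + (if hasG then g else 0) := by
    set B1 := 𝒯.biUnion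
        (fun S => (Finset.range (dem n w lam i S)).image
          (fun t => ((some S : Option (Finset (Fin n))), t))) with hB1
    set B2 := (if hasG then (Finset.range g).image
        (fun t => ((none : Option (Finset (Fin n))), t)) else ∅) with hB2
    have husub : u ⊆ B1 ∪ B2 := by
      intro p hp
      have hpT : p ∈ tokens n w lam i g := by
        rw [hu, Finset.mem_image] at hp
        obtain ⟨x, _, rfl⟩ := hp
        exact x.2
      rw [mem_tokens] at hpT
      rcases hpT with ⟨S, hS, t, ht, rfl⟩ | ⟨t, ht, rfl⟩
      · refine Finset.mem_union_left _ ?_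
        rw [hB1, Finset.mem_biUnion]
        refine ⟨S, ?_, ?_⟩
        · rw [h𝒯, Finset.mem_filter]
          exact ⟨hS, ⟨_, hp, rfl⟩⟩
        · simp only [Finset.mem_image, Finset.mem_range]
          exact ⟨t, ht, rfl⟩
      · refine Finset.mem_union_right _ ?_
        have hGG : hasG := ⟨_, hp, rfl⟩
        rw [hB2, if_pos hGG]
        simp only [Finset.mem_image, Finset.mem_range]
        exact ⟨t, ht, rfl⟩
    have c1 : B1.card ≤ ∑ S ∈ 𝒯, dem n w lam i S := by
      calc B1.card ≤ ∑ S ∈ 𝒯, ((Finset.range (dem n w lam i S)).image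
            (fun t => ((some S : Option (Finset (Fin n))), t))).card :=
            Finset.card_biUnion_le
        _ ≤ _ := Finset.sum_le_sum (fun S _ => le_trans (Finset.card_image_le)
            (le_of_eq (Finset.card_range _)))
    have c2 : B2.card ≤ (if hasG then g else 0) := by
      rw [hB2]
      split
      · exact le_trans (Finset.card_image_le) (le_of_eq (Finset.card_range _))
      · simp
    calc u.card ≤ (B1 ∪ B2).card := Finset.card_le_card husub
      _ ≤ B1.card + B2.card := Finset.card_union_le _ _
      _ ≤ _ := Nat.add_le_add c1 c2
  -- Step B : total demand (times n - i) is at most |Ns| * (n - i)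
  have stepB : ((∑ S ∈ 𝒯, dem n w lam i S) + (if hasG then g else 0)) * (n - i)
      ≤ Ns.card * (n - i) := by
    rw [Nat.add_mul, Finset.sum_mul]
    have e1 : ∑ S ∈ 𝒯, dem n w lam i S * (n - i)
        = ∑ p ∈ Finset.univ.filter
            (fun p : Fin N × Fin k => A p.1 p.2.castSucc ∈ 𝒯),
            (w - (A p.1 p.2.castSucc).card) := by
      rw [Finset.sum_congr rfl (fun S hS => dem_mul h hi (h𝒯sub hS))]
      exact slot_sum_eq h h𝒯sub
    have hFsub : Finset.univ.filter
        (fun p : Fin N × Fin k => A p.1 p.2.castSucc ∈ 𝒯) ⊆ Ns ×ˢ Finset.univ := by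
      intro p hp
      rw [Finset.mem_filter] at hp
      have hS𝒯 := hp.2
      rw [h𝒯, Finset.mem_filter] at hS𝒯
      obtain ⟨x, hxu, hx1⟩ := hS𝒯.2
      rw [Finset.mem_product]
      refine ⟨hnbNs x hxu ?_, Finset.mem_univ _⟩
      rw [nb, hx1]
      simp only [Finset.mem_filter, Finset.mem_univ, true_and]
      exact ⟨p.2, rfl⟩
    have bound1 : ∑ p ∈ Finset.univ.filter
        (fun p : Fin N × Fin k => A p.1 p.2.castSucc ∈ 𝒯),
        (w - (A p.1 p.2.castSucc).card)
        ≤ ∑ j ∈ Ns, (∑ b : Fin k, (w - (A j b.castSucc).card)) := by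
      calc _ ≤ ∑ p ∈ Ns ×ˢ Finset.univ,
            (w - (A p.1 p.2.castSucc).card) :=
            Finset.sum_le_sum_of_subset hFsub
        _ = _ := Finset.sum_product _ _ _
    have bound2 : (if hasG then g else 0) * (n - i)
        ≤ ∑ j ∈ Ns, (r - (A j (Fin.last k)).card) := by
      split
      · next hG =>
          rw [hgm]
          refine le_of_eq (Finset.sum_subset (Finset.subset_univ Ns) ?_).symm
          intro j _ hjNs
          obtain ⟨p, hpu, hp1⟩ := hG
          have hnb : j ∉ nb r A p := fun hc => hjNs (hnbNs p hpu hc)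
          rw [nb, hp1] at hnb
          simp only [Finset.mem_filter, Finset.mem_univ, true_and] at hnb
          have := h.cardG j
          omega
      · simp
    calc ∑ S ∈ 𝒯, dem n w lam i S * (n - i) + (if hasG then g else 0) * (n - i)
        ≤ (∑ j ∈ Ns, (∑ b : Fin k, (w - (A j b.castSucc).card)))
          + ∑ j ∈ Ns, (r - (A j (Fin.last k)).card) := by
          rw [e1]; exact Nat.add_le_add bound1 bound2
      _ = ∑ j ∈ Ns, ((∑ b : Fin k, (w - (A j b.castSucc).card))
          + (r - (A j (Fin.last k)).card)) := (Finset.sum_add_distrib).symm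
      _ = ∑ _j ∈ Ns, (n - i) :=
          Finset.sum_congr rfl (fun j _ => class_slack h (le_of_lt hi) hn j)
      _ = Ns.card * (n - i) := by rw [Finset.sum_const, smul_eq_mul]
  have hm : 0 < n - i := by omega
  have := le_trans (Nat.mul_le_mul_right (n - i) stepA) stepB
  rw [hucard] at this
  exact Nat.le_of_mul_le_mul_right this hm

end

section
variable {n w k r lam N i : ℕ} {A : Fin N → Fin (k+1) → Finset (Fin n)}

lemma step (h : St n w k r lam N i A) (hi : i < n) (hn : k * w + r = n) :
    ∃ A' : Fin N → Fin (k+1) → Finset (Fin n), St n w k r lam N (i+1) A' := by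
  classical
  set g := N - ∑ S ∈ scal n w i, dem n w lam i S with hgdef
  have hglob := global_ident (A := A) h hi hn
  have hm : 0 < n - i := by omega
  have hdemN : (∑ S ∈ scal n w i, dem n w lam i S) ≤ N := by
    have h1 : (∑ S ∈ scal n w i, dem n w lam i S) * (n - i) ≤ N * (n - i) := by omega
    exact Nat.le_of_mul_le_mul_right h1 hm
  have hgm : g * (n - i) = ∑ j : Fin N, (r - (A j (Fin.last k)).card) := by
    rw [hgdef, Nat.sub_mul]
    omega
  obtain ⟨f, hfinj, hfmem⟩ :=
    (Finset.all_card_le_biUnion_card_iff_exists_injective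
      (fun x : {x // x ∈ tokens n w lam i g} => nb r A x.1)).mp
      (hall_cond h hi hn hgm)
  have hcardT : Fintype.card {x // x ∈ tokens n w lam i g} = N := by
    rw [Fintype.card_coe, card_tokens]
    omega
  have hfbij : Function.Bijective f :=
    (Fintype.bijective_iff_injective_and_card f).mpr
      ⟨hfinj, by rw [hcardT, Fintype.card_fin]⟩
  set e := Equiv.ofBijective f hfbij with he
  set tok : Fin N → {x // x ∈ tokens n w lam i g} := fun j => e.symm j with htokdef
  have htok : ∀ j, f (tok j) = j := fun j => e.apply_symm_apply j
  have htok_inj : Function.Injective tok := e.symm.injective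
  have hjnb : ∀ j : Fin N, j ∈ nb r A (tok j).1 := by
    intro j
    have := hfmem (tok j)
    rwa [htok j] at this
  set typ : Fin N → Option (Finset (Fin n)) := fun j => (tok j).1.1 with htyp
  have hpe : ∀ j, ((tok j).1 : Option (Finset (Fin n)) × ℕ) = (typ j, ((tok j).1).2) :=
    fun j => rfl
  -- membership facts about types
  have hpw : ∀ j S, typ j = some S → S ∈ scal n w i := by
    intro j S hjS
    have hmem := (tok j).2
    rw [mem_tokens] at hmem
    rcases hmem with ⟨S', hS', t, _, hp2⟩ | ⟨t, _, hp2⟩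
    · have h1 : typ j = some S' := by
        have := congrArg Prod.fst hp2
        rw [hpe j] at this
        exact this
      rw [hjS] at h1
      exact (Option.some.inj h1) ▸ hS'
    · have h1 : typ j = none := by
        have := congrArg Prod.fst hp2
        rw [hpe j] at this
        exact this
      rw [hjS] at h1
      exact absurd h1 (by simp)
  -- count of classes with a given type
  have hcntTyp : ∀ S ∈ scal n w i,
      (Finset.univ.filter (fun j : Fin N => typ j = some S)).card = dem n w lam i S := by
    intro S hS
    have hTfil : ((tokens n w lam i g).filter (fun p => p.1 = some S)).card
        = dem n w lam i S := by
      have : (tokens n w lam i g).filter (fun p => p.1 = some S)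
          = (Finset.range (dem n w lam i S)).image (fun t => (some S, t)) := by
        ext p
        rw [Finset.mem_filter, mem_tokens]
        simp only [Finset.mem_image, Finset.mem_range]
        constructor
        · rintro ⟨⟨S', hS', t, ht, rfl⟩ | ⟨t, ht, rfl⟩, hp1⟩
          · have : S' = S := Option.some.inj hp1
            subst this
            exact ⟨t, ht, rfl⟩
          · exact absurd hp1 (by simp)
        · rintro ⟨t, ht, rfl⟩
          exact ⟨Or.inl ⟨S, hS, t, ht, rfl⟩, rfl⟩
      rw [this, Finset.card_image_of_injective, Finset.card_range]
      intro a b hab; simpa using hab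
    rw [← hTfil]
    refine Finset.card_bij (fun j _ => (tok j).1) ?_ ?_ ?_
    · intro j hj
      rw [Finset.mem_filter] at hj ⊢
      exact ⟨(tok j).2, hj.2⟩
    · intro j₁ h₁ j₂ h₂ hj
      exact htok_inj (Subtype.ext hj)
    · intro p hp
      rw [Finset.mem_filter] at hp
      have hts : tok (f ⟨p, hp.1⟩) = ⟨p, hp.1⟩ := e.symm_apply_apply _
      refine ⟨f ⟨p, hp.1⟩, ?_, ?_⟩
      · rw [Finset.mem_filter]
        refine ⟨Finset.mem_univ _, ?_⟩
        show ((tok (f ⟨p, hp.1⟩)).1).1 = some S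
        rw [hts]
        exact hp.2
      · show ((tok (f ⟨p, hp.1⟩)).1 : Option (Finset (Fin n)) × ℕ) = p
        rw [hts]
  -- the choice of block receiving the new vertex
  have hpick0 : ∀ j : Fin N, ∃ b : Fin (k+1),
      (∃ S, typ j = some S ∧ b ≠ Fin.last k ∧ A j b = S) ∨
      (typ j = none ∧ b = Fin.last k ∧ (A j b).card < r) := by
    intro j
    have hnbj := hjnb j
    rw [hpe j] at hnbj
    rcases Option.eq_none_or_eq_some (typ j) with htj | ⟨S, htj⟩
    · rw [htj, nb_none] at hnbj
      simp only [Finset.mem_filter, Finset.mem_univ, true_and] at hnbj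
      exact ⟨Fin.last k, Or.inr ⟨htj, rfl, hnbj⟩⟩
    · rw [htj, nb_some] at hnbj
      simp only [Finset.mem_filter, Finset.mem_univ, true_and] at hnbj
      obtain ⟨b, hb⟩ := hnbj
      exact ⟨b.castSucc, Or.inl ⟨S, htj, (Fin.castSucc_lt_last b).ne, hb⟩⟩
  choose pick hpick using hpick0
  have hpick1 : ∀ j S, typ j = some S → A j (pick j) = S ∧ pick j ≠ Fin.last k := by
    intro j S hjS
    rcases hpick j with ⟨S', hS', hne, hA⟩ | ⟨hnone, _, _⟩
    · rw [hjS] at hS'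
      exact ⟨(Option.some.inj hS') ▸ hA, hne⟩
    · rw [hjS] at hnone; exact absurd hnone (by simp)
  have hpick2 : ∀ j, pick j = Fin.last k → (A j (pick j)).card < r := by
    intro j hlast
    rcases hpick j with ⟨S', _, hne, _⟩ | ⟨_, _, hcard⟩
    · exact absurd hlast hne
    · exact hcard
  set vi : Fin n := ⟨i, hi⟩ with hvi
  have hviA : ∀ j b, vi ∉ A j b := by
    intro j b hv
    have := (h.cover j vi).mpr ⟨b, hv⟩
    simp [hvi] at this
  set A' : Fin N → Fin (k+1) → Finset (Fin n) :=
    fun j b => if b = pick j then insert vi (A j b) else A j b with hA'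
  have hA'sub : ∀ j b, A j b ⊆ A' j b := by
    intro j b
    simp only [hA']
    split
    · exact Finset.subset_insert _ _
    · exact Finset.Subset.refl _
  -- chosen slots have a type in scal
  have hchosen_typ : ∀ p : Fin N × Fin k, p.2.castSucc = pick p.1 →
      typ p.1 = some (A p.1 p.2.castSucc) ∧ (A p.1 p.2.castSucc) ∈ scal n w i := by
    intro p hch
    rcases Option.eq_none_or_eq_some (typ p.1) with htj | ⟨S, htj⟩
    · rcases hpick p.1 with ⟨S', hS', _, _⟩ | ⟨_, hlast, _⟩
      · rw [htj] at hS'; exact absurd hS' (by simp)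
      · rw [← hch] at hlast
        exact absurd hlast (Fin.castSucc_lt_last p.2).ne
    · obtain ⟨hAS, _⟩ := hpick1 p.1 S htj
      rw [← hch] at hAS
      rw [hAS]
      exact ⟨htj, hpw p.1 S htj⟩
  -- key count of chosen slots with a given value
  have hKC : ∀ S ∈ scal n w i,
      (Finset.univ.filter (fun p : Fin N × Fin k =>
        A p.1 p.2.castSucc = S ∧ p.2.castSucc = pick p.1)).card = dem n w lam i S := by
    intro S hS
    rw [← hcntTyp S hS]
    refine Finset.card_bij (fun p _ => p.1) ?_ ?_ ?_
    · intro p hp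
      rw [Finset.mem_filter] at hp ⊢
      obtain ⟨htp, _⟩ := hchosen_typ p hp.2.2
      rw [hp.2.1] at htp
      exact ⟨Finset.mem_univ _, htp⟩
    · intro p₁ h₁ p₂ h₂ hp
      rw [Finset.mem_filter] at h₁ h₂
      have hp' : p₁.1 = p₂.1 := hp
      have hc : p₁.2.castSucc = p₂.2.castSucc := by
        rw [h₁.2.2, h₂.2.2, hp']
      exact Prod.ext hp' (Fin.castSucc_injective k hc)
    · intro j hj
      rw [Finset.mem_filter] at hj
      obtain ⟨hAj, hne⟩ := hpick1 j S hj.2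
      have hlt : (pick j : ℕ) < k := by
        have h1 := (pick j).isLt
        have h2 : (pick j : ℕ) ≠ k := fun hc => hne (Fin.ext (by simp [hc, Fin.last]))
        omega
      refine ⟨(j, ⟨(pick j : ℕ), hlt⟩), ?_, rfl⟩
      rw [Finset.mem_filter]
      have hcs : (⟨(pick j : ℕ), hlt⟩ : Fin k).castSucc = pick j := by
        apply Fin.ext; simp [Fin.castSucc]
      exact ⟨Finset.mem_univ _, by rw [hcs]; exact hAj, hcs⟩
  refine ⟨A', ?_⟩
  refine ⟨?_, ?_, ?_, ?_, ?_⟩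
  · -- disj
    intro j b b' hbb
    have base := h.disj j b b' hbb
    simp only [hA']
    split <;> split
    · next hb hb' => exact absurd (hb.trans hb'.symm) hbb
    · next hb hb' =>
        rw [Finset.disjoint_insert_left]
        exact ⟨hviA j b', base⟩
    · next hb hb' =>
        rw [Finset.disjoint_insert_right]
        exact ⟨hviA j b, base⟩
    · next hb hb' => exact base
  · -- cover
    intro j v
    constructor
    · intro hv
      by_cases hvlt : (v : ℕ) < i
      · obtain ⟨b, hb⟩ := (h.cover j v).mp hvlt
        exact ⟨b, hA'sub j b hb⟩
      · have : v = vi := Fin.ext (by simp [hvi]; omega)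
        subst this
        refine ⟨pick j, ?_⟩
        simp only [hA']
        simp
    · rintro ⟨b, hb⟩
      simp only [hA'] at hb
      by_cases hbp : b = pick j
      · rw [if_pos hbp, Finset.mem_insert] at hb
        rcases hb with rfl | hb
        · simp [hvi]
        · have := (h.cover j v).mpr ⟨b, hb⟩; omega
      · rw [if_neg hbp] at hb
        have := (h.cover j v).mpr ⟨b, hb⟩; omega
  · -- cardW
    intro j b
    simp only [hA']
    split
    · next hb =>
        obtain ⟨_, hscal⟩ := hchosen_typ (j, b) hb
        rw [scal, Finset.mem_filter] at hscal
        calc (insert vi (A j b.castSucc)).card ≤ (A j b.castSucc).card + 1 :=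
              Finset.card_insert_le _ _
          _ ≤ w := hscal.2
    · exact h.cardW j b
  · -- cardG
    intro j
    simp only [hA']
    split
    · next hb =>
        have := hpick2 j hb.symm
        rw [← hb] at this
        calc (insert vi (A j (Fin.last k))).card ≤ (A j (Fin.last k)).card + 1 :=
              Finset.card_insert_le _ _
          _ ≤ r := by omega
    · exact h.cardG j
  · -- count
    intro S hScard hSsub
    by_cases hviS : vi ∈ S
    · -- the new vertex is in S
      have hScard1 : 1 ≤ S.card := Finset.card_pos.mpr ⟨vi, hviS⟩
      have hS0sub : S.erase vi ⊆ pre n i := by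
        intro v hv
        rw [Finset.mem_erase] at hv
        have h1 := mem_pre.mp (hSsub hv.2)
        rw [mem_pre]
        have : (v : ℕ) ≠ i := fun hc => hv.1 (Fin.ext (by simp [hvi, hc]))
        omega
      have hS0scal : S.erase vi ∈ scal n w i := by
        rw [scal, Finset.mem_filter, Finset.mem_powerset]
        refine ⟨hS0sub, ?_⟩
        rw [Finset.card_erase_of_mem hviS]
        omega
      have hfe : Finset.univ.filter (fun p : Fin N × Fin k => A' p.1 p.2.castSucc = S)
          = Finset.univ.filter (fun p : Fin N × Fin k =>
              A p.1 p.2.castSucc = S.erase vi ∧ p.2.castSucc = pick p.1) := by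
        ext p
        simp only [Finset.mem_filter, Finset.mem_univ, true_and]
        simp only [hA']
        constructor
        · intro hA'p
          by_cases hch : p.2.castSucc = pick p.1
          · rw [if_pos hch] at hA'p
            refine ⟨?_, hch⟩
            rw [← hA'p, Finset.erase_insert (hviA p.1 p.2.castSucc)]
          · rw [if_neg hch] at hA'p
            exact absurd (mem_pre.mp (block_sub h p.1 p.2.castSucc (hA'p ▸ hviS)))
              (by simp [hvi])
        · rintro ⟨hAp, hch⟩
          rw [if_pos hch, hAp, Finset.insert_erase hviS]
      rw [hfe, hKC _ hS0scal]
      rw [dem, Finset.card_erase_of_mem hviS]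
      have e1 : w - (S.card - 1) - 1 = w - S.card := by omega
      have e2 : n - i - 1 = n - (i + 1) := by omega
      rw [e1, e2]
    · -- the new vertex is not in S
      have hSsub' : S ⊆ pre n i := by
        intro v hv
        have h1 := mem_pre.mp (hSsub hv)
        rw [mem_pre]
        have : (v : ℕ) ≠ i := fun hc => hviS ((Fin.ext (by simp [hvi, hc]) : v = vi) ▸ hv)
        omega
      have hfe : Finset.univ.filter (fun p : Fin N × Fin k => A' p.1 p.2.castSucc = S)
          = (Finset.univ.filter (fun p : Fin N × Fin k => A p.1 p.2.castSucc = S)).filter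
              (fun p => ¬ p.2.castSucc = pick p.1) := by
        ext p
        simp only [Finset.mem_filter, Finset.mem_univ, true_and]
        simp only [hA']
        constructor
        · intro hA'p
          by_cases hch : p.2.castSucc = pick p.1
          · rw [if_pos hch] at hA'p
            exact absurd (hA'p ▸ Finset.mem_insert_self vi _) hviS
          · rw [if_neg hch] at hA'p
            exact ⟨hA'p, hch⟩
        · rintro ⟨hAp, hch⟩
          rw [if_neg hch]
          exact hAp
      have hsplit := Finset.card_filter_add_card_filter_not
        (s := Finset.univ.filter (fun p : Fin N × Fin k => A p.1 p.2.castSucc = S))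
        (p := fun p => p.2.castSucc = pick p.1)
      have htotal : (Finset.univ.filter
          (fun p : Fin N × Fin k => A p.1 p.2.castSucc = S)).card
            = lam * Nat.choose (n - i) (w - S.card) := h.count S hScard hSsub'
      have hchfilter : ((Finset.univ.filter
          (fun p : Fin N × Fin k => A p.1 p.2.castSucc = S)).filter
            (fun p => p.2.castSucc = pick p.1))
          = Finset.univ.filter (fun p : Fin N × Fin k =>
              A p.1 p.2.castSucc = S ∧ p.2.castSucc = pick p.1) := by
        rw [Finset.filter_filter]
      rw [hfe]
      by_cases hSw : S.card < w
      · have hSscal : S ∈ scal n w i := by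
          rw [scal, Finset.mem_filter, Finset.mem_powerset]
          exact ⟨hSsub', hSw⟩
        have hch := hKC S hSscal
        rw [← hchfilter] at hch
        have hpascal : Nat.choose (n - i) (w - S.card)
            = Nat.choose (n - i - 1) (w - S.card - 1) + Nat.choose (n - i - 1) (w - S.card) := by
          obtain ⟨a, ha⟩ : ∃ a, n - i = a + 1 := ⟨n - i - 1, by omega⟩
          obtain ⟨t, ht⟩ : ∃ t, w - S.card = t + 1 := ⟨w - S.card - 1, by omega⟩
          have ha1 : n - i - 1 = a := by omega
          have ht1 : w - S.card - 1 = t := by omega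
          rw [ha1, ht1, ha, ht]
          exact Nat.choose_succ_succ a t
        have e3 : n - (i + 1) = n - i - 1 := by omega
        rw [e3]
        rw [dem] at hch
        have := hsplit
        rw [htotal, hch, hpascal, Nat.mul_add] at this
        omega
      · -- S.card = w
        have hSw' : S.card = w := by omega
        have hchzero : ((Finset.univ.filter
            (fun p : Fin N × Fin k => A p.1 p.2.castSucc = S)).filter
              (fun p => p.2.castSucc = pick p.1)).card = 0 := by
          rw [Finset.card_eq_zero, Finset.filter_eq_empty_iff]
          intro p hp
          rw [Finset.mem_filter] at hp
          intro hch
          obtain ⟨_, hscal⟩ := hchosen_typ p hch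
          rw [hp.2, scal, Finset.mem_filter] at hscal
          omega
        have := hsplit
        rw [htotal, hchzero] at this
        rw [hSw', Nat.sub_self] at this ⊢
        simp only [Nat.choose_zero_right, Nat.mul_one] at this ⊢
        omega

lemma exists_state (hn : k * w + r = n) (hNk : N * k = lam * Nat.choose n w) :
    ∀ i ≤ n, ∃ A : Fin N → Fin (k+1) → Finset (Fin n), St n w k r lam N i A := by
  intro i
  induction i with
  | zero => exact fun _ => ⟨_, base n w k r lam N hNk⟩
  | succ m ih =>
      intro hm
      obtain ⟨A, hA⟩ := ih (by omega)
      exact step hA (by omega) hn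

end

section
variable {n w k r lam N : ℕ} {A : Fin N → Fin (k+1) → Finset (Fin n)}

lemma final_blockw (h : St n w k r lam N n A) (j : Fin N) (b : Fin k) :
    (A j b.castSucc).card = w := by
  classical
  by_contra hne
  have hle := h.cardW j b
  have hsub : A j b.castSucc ⊆ pre n n := block_sub h j b.castSucc
  have hcnt := h.count (A j b.castSucc) hle hsub
  rw [Nat.sub_self] at hcnt
  have hz : Nat.choose 0 (w - (A j b.castSucc).card) = 0 :=
    Nat.choose_eq_zero_of_lt (by omega)
  rw [hz, Nat.mul_zero, Finset.card_eq_zero] at hcnt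
  have hmem : (j, b) ∈ Finset.univ.filter
      (fun p : Fin N × Fin k => A p.1 p.2.castSucc = A j b.castSucc) := by simp
  rw [hcnt] at hmem
  exact absurd hmem (Finset.notMem_empty _)

lemma final_J (h : St n w k r lam N n A) (hw : 1 ≤ w) (S : Finset (Fin n))
    (hS : S.card = w) :
    (Finset.univ.filter (fun j : Fin N => ∃ b : Fin k, A j b.castSucc = S)).card = lam := by
  classical
  have hsub : S ⊆ pre n n := fun v _ => mem_pre.mpr v.isLt
  have hcnt := h.count S (le_of_eq hS) hsub
  rw [Nat.sub_self, hS, Nat.sub_self, Nat.choose_self, Nat.mul_one] at hcnt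
  rw [← hcnt]
  have hSne : S.Nonempty := Finset.card_pos.mp (by omega)
  refine (Finset.card_bij (fun p _ => p.1) ?_ ?_ ?_).symm
  · intro p hp
    rw [Finset.mem_filter] at hp ⊢
    exact ⟨Finset.mem_univ _, p.2, hp.2⟩
  · intro p₁ h₁ p₂ h₂ hp
    rw [Finset.mem_filter] at h₁ h₂
    have hp' : p₁.1 = p₂.1 := hp
    refine Prod.ext hp' ?_
    by_contra hne
    have hdisj := h.disj p₁.1 p₁.2.castSucc p₂.2.castSucc
      (fun hc => hne (Fin.castSucc_injective k hc))
    rw [h₁.2, hp', h₂.2] at hdisj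
    obtain ⟨v, hv⟩ := hSne
    exact (Finset.disjoint_left.mp hdisj) hv hv
  · intro j hj
    rw [Finset.mem_filter] at hj
    obtain ⟨b, hb⟩ := hj.2
    exact ⟨(j, b), Finset.mem_filter.mpr ⟨Finset.mem_univ _, hb⟩, rfl⟩

end

section Words

variable {q n : ℕ}

/-- the words with support exactly `S`. -/
def WS (q n : ℕ) [NeZero q] (S : Finset (Fin n)) : Finset (Fin n → ZMod q) :=
  Finset.univ.filter (fun x => ∀ v, x v ≠ 0 ↔ v ∈ S)

variable [NeZero q]

lemma mem_WS {S : Finset (Fin n)} {x : Fin n → ZMod q} :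
    x ∈ WS q n S ↔ ∀ v, x v ≠ 0 ↔ v ∈ S := by
  simp [WS]

lemma hammingNorm_filter (x : Fin n → ZMod q) :
    hammingNorm x = (Finset.univ.filter (fun v => x v ≠ 0)).card := rfl

lemma supp_eq_of_mem_WS {S : Finset (Fin n)} {x : Fin n → ZMod q}
    (hx : x ∈ WS q n S) : (Finset.univ.filter (fun v => x v ≠ 0)) = S := by
  rw [mem_WS] at hx
  ext v
  simp only [Finset.mem_filter, Finset.mem_univ, true_and]
  exact hx v

lemma norm_of_mem_WS {S : Finset (Fin n)} {x : Fin n → ZMod q}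
    (hx : x ∈ WS q n S) : hammingNorm x = S.card := by
  rw [hammingNorm_filter, supp_eq_of_mem_WS hx]

lemma card_WS (hq : 2 ≤ q) (S : Finset (Fin n)) :
    (WS q n S).card = (q - 1) ^ S.card := by
  classical
  haveI : NeZero q := ⟨by omega⟩
  have hcard0 : Fintype.card {a : ZMod q // a ≠ 0} = q - 1 := by
    rw [Fintype.card_subtype]
    rw [Finset.filter_ne' Finset.univ (0 : ZMod q)]
    rw [Finset.card_erase_of_mem (Finset.mem_univ _), Finset.card_univ, ZMod.card]
  have hEquiv : {x // x ∈ WS q n S} ≃ ({v // v ∈ S} → {a : ZMod q // a ≠ 0}) := by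
    refine ⟨fun x v => ⟨x.1 v.1, ?_⟩, fun f => ⟨fun v => if h : v ∈ S then (f ⟨v, h⟩).1 else 0, ?_⟩, ?_, ?_⟩
    · exact (mem_WS.mp x.2 v.1).mpr v.2
    · rw [mem_WS]
      intro v
      constructor
      · intro hne
        by_contra hvS
        rw [dif_neg hvS] at hne
        exact hne rfl
      · intro hvS
        rw [dif_pos hvS]
        exact (f ⟨v, hvS⟩).2
    · intro x
      apply Subtype.ext
      funext v
      by_cases hv : v ∈ S
      · simp only [dif_pos hv]
      · simp only [dif_neg hv]
        by_contra hne
        exact hv ((mem_WS.mp x.2 v).mp (Ne.symm hne))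
    · intro f
      funext v
      apply Subtype.ext
      simp only [dif_pos v.2]
  calc (WS q n S).card = Fintype.card {x // x ∈ WS q n S} := (Fintype.card_coe _).symm
    _ = Fintype.card ({v // v ∈ S} → {a : ZMod q // a ≠ 0}) := Fintype.card_congr hEquiv
    _ = (q - 1) ^ S.card := by
        rw [Fintype.card_fun, hcard0, Fintype.card_coe]

/-- the word picked for class `j` and support `S`. -/
noncomputable def wordOf (q : ℕ) [NeZero q] {n N w : ℕ} (J : Finset (Fin n) → Finset (Fin N))
    (φ : ∀ S : Finset (Fin n), S.card = w → ({j // j ∈ J S} ≃ {x // x ∈ WS q n S}))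
    (j : Fin N) (S : Finset (Fin n)) : Fin n → ZMod q :=
  if h : ∃ _hS : S.card = w, j ∈ J S then (φ S h.choose ⟨j, h.choose_spec⟩ : {x // x ∈ WS q n S}).1
  else 0

lemma wordOf_eq (q : ℕ) [NeZero q] {n N w : ℕ} {J : Finset (Fin n) → Finset (Fin N)}
    {φ : ∀ S : Finset (Fin n), S.card = w → ({j // j ∈ J S} ≃ {x // x ∈ WS q n S})}
    {j : Fin N} {S : Finset (Fin n)} (hS : S.card = w) (hj : j ∈ J S) :
    wordOf q J φ j S = (φ S hS ⟨j, hj⟩ : {x // x ∈ WS q n S}).1 := by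
  rw [wordOf, dif_pos ⟨hS, hj⟩]

end Words

lemma reverse (q n w : ℕ) (hq : 2 ≤ q) (hw : 1 ≤ w) (hwn : w ≤ n)
    (hdvd : n / w ∣ (q - 1) ^ w * Nat.choose n w) :
    ∃ P : Finset (Finset (Fin n → ZMod q)),
        (∀ C ∈ P, C.card = n / w ∧ (∀ x ∈ C, hammingNorm x = w) ∧
          ∀ x ∈ C, ∀ y ∈ C, x ≠ y → ∀ i, x i = 0 ∨ y i = 0) ∧
        (∀ C ∈ P, ∀ D ∈ P, C ≠ D → Disjoint C D) ∧
        ∀ x : Fin n → ZMod q, hammingNorm x = w → ∃ C ∈ P, x ∈ C := by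
  classical
  haveI : NeZero q := ⟨by omega⟩
  set k := n / w with hkdef
  set lam := (q - 1) ^ w with hlamdef
  set N := lam * Nat.choose n w / k with hNdef
  have hk : 1 ≤ k := Nat.div_pos hwn (by omega)
  have hn : k * w + n % w = n := by
    rw [hkdef, mul_comm]
    exact Nat.div_add_mod n w
  have hr : n % w < w := Nat.mod_lt n (by omega)
  have hNk : N * k = lam * Nat.choose n w := Nat.div_mul_cancel hdvd
  obtain ⟨A, hA⟩ := exists_state (r := n % w) (lam := lam) (N := N) hn hNk n le_rfl
  -- classes containing S as one of their w-blocks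
  set J : Finset (Fin n) → Finset (Fin N) :=
    fun S => Finset.univ.filter (fun j => ∃ b : Fin k, A j b.castSucc = S) with hJdef
  have hJcard : ∀ S : Finset (Fin n), S.card = w → (J S).card = (WS q n S).card := by
    intro S hS
    rw [hJdef]
    rw [final_J hA hw S hS, card_WS hq S, hS, hlamdef]
  set φ : ∀ S : Finset (Fin n), S.card = w → ({j // j ∈ J S} ≃ {x // x ∈ WS q n S}) :=
    fun S hS => Finset.equivOfCardEq (hJcard S hS) with hφdef
  have hblockw : ∀ (j : Fin N) (b : Fin k), (A j b.castSucc).card = w :=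
    fun j b => final_blockw hA j b
  have hbmem : ∀ (j : Fin N) (b : Fin k), j ∈ J (A j b.castSucc) := by
    intro j b
    rw [hJdef]
    exact Finset.mem_filter.mpr ⟨Finset.mem_univ _, b, rfl⟩
  have hwordmem : ∀ (j : Fin N) (b : Fin k),
      wordOf q J φ j (A j b.castSucc) ∈ WS q n (A j b.castSucc) := by
    intro j b
    rw [wordOf_eq q (hblockw j b) (hbmem j b)]
    exact Finset.coe_mem _
  have hwinj : ∀ (S : Finset (Fin n)) (hS : S.card = w) (j j' : Fin N)
      (hj : j ∈ J S) (hj' : j' ∈ J S),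
      wordOf q J φ j S = wordOf q J φ j' S → j = j' := by
    intro S hS j j' hj hj' heq
    rw [wordOf_eq q hS hj, wordOf_eq q hS hj'] at heq
    have h2 := (φ S hS).injective (Subtype.ext heq)
    exact congrArg Subtype.val h2
  set C : Fin N → Finset (Fin n → ZMod q) :=
    fun j => Finset.univ.image (fun b : Fin k => wordOf q J φ j (A j b.castSucc)) with hCdef
  have hCmem : ∀ (j : Fin N) (x : Fin n → ZMod q), x ∈ C j →
      ∃ b : Fin k, x = wordOf q J φ j (A j b.castSucc) := by
    intro j x hx
    rw [hCdef] at hx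
    simp only [Finset.mem_image, Finset.mem_univ, true_and] at hx
    obtain ⟨b, hb⟩ := hx
    exact ⟨b, hb.symm⟩
  have hblock_of_word : ∀ (j : Fin N) (b : Fin k),
      (Finset.univ.filter (fun v => wordOf q J φ j (A j b.castSucc) v ≠ 0))
        = A j b.castSucc := fun j b => supp_eq_of_mem_WS (hwordmem j b)
  have hblock_inj : ∀ (j : Fin N) (b b' : Fin k),
      A j b.castSucc = A j b'.castSucc → b = b' := by
    intro j b b' hbb
    by_contra hne
    have hdisj := hA.disj j b.castSucc b'.castSucc
      (fun hc => hne (Fin.castSucc_injective k hc))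
    rw [hbb] at hdisj
    have hne2 : (A j b'.castSucc).Nonempty := Finset.card_pos.mp (by rw [hblockw]; omega)
    obtain ⟨v, hv⟩ := hne2
    exact (Finset.disjoint_left.mp hdisj) hv hv
  have hword_injb : ∀ (j : Fin N) (b b' : Fin k),
      wordOf q J φ j (A j b.castSucc) = wordOf q J φ j (A j b'.castSucc) → b = b' := by
    intro j b b' heq
    apply hblock_inj j b b'
    rw [← hblock_of_word j b, ← hblock_of_word j b', heq]
  refine ⟨Finset.univ.image C, ?_, ?_, ?_⟩
  · -- each class is a good code
    intro Cs hCs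
    rw [Finset.mem_image] at hCs
    obtain ⟨j, _, rfl⟩ := hCs
    refine ⟨?_, ?_, ?_⟩
    · rw [hCdef]
      rw [Finset.card_image_of_injective _ (fun b b' => hword_injb j b b')]
      rw [Finset.card_univ, Fintype.card_fin]
    · intro x hx
      obtain ⟨b, rfl⟩ := hCmem j x hx
      rw [norm_of_mem_WS (hwordmem j b), hblockw]
    · intro x hx y hy hxy v
      obtain ⟨b, rfl⟩ := hCmem j x hx
      obtain ⟨b', rfl⟩ := hCmem j y hy
      have hbb' : b ≠ b' := fun hc => hxy (by rw [hc])
      have hdisj := hA.disj j b.castSucc b'.castSucc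
        (fun hc => hbb' (Fin.castSucc_injective k hc))
      by_contra hcon
      push_neg at hcon
      have hv1 : v ∈ A j b.castSucc := by
        rw [← hblock_of_word j b]
        simp only [Finset.mem_filter, Finset.mem_univ, true_and]
        exact hcon.1
      have hv2 : v ∈ A j b'.castSucc := by
        rw [← hblock_of_word j b']
        simp only [Finset.mem_filter, Finset.mem_univ, true_and]
        exact hcon.2
      exact (Finset.disjoint_left.mp hdisj) hv1 hv2
  · -- pairwise disjoint
    intro C₁ hC₁ C₂ hC₂ hC12
    rw [Finset.mem_image] at hC₁ hC₂
    obtain ⟨j₁, _, rfl⟩ := hC₁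
    obtain ⟨j₂, _, rfl⟩ := hC₂
    rw [Finset.disjoint_left]
    intro x hx1 hx2
    obtain ⟨b₁, hb₁⟩ := hCmem j₁ x hx1
    obtain ⟨b₂, hb₂⟩ := hCmem j₂ x hx2
    have hSS : A j₁ b₁.castSucc = A j₂ b₂.castSucc := by
      rw [← hblock_of_word j₁ b₁, ← hblock_of_word j₂ b₂, ← hb₁, ← hb₂]
    have hj2mem : j₂ ∈ J (A j₁ b₁.castSucc) := by
      rw [hSS]; exact hbmem j₂ b₂
    have heq : wordOf q J φ j₁ (A j₁ b₁.castSucc) = wordOf q J φ j₂ (A j₁ b₁.castSucc) := by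
      rw [← hb₁, hb₂, hSS]
    have : j₁ = j₂ := hwinj _ (hblockw j₁ b₁) j₁ j₂ (hbmem j₁ b₁) hj2mem heq
    exact hC12 (by rw [this])
  · -- covering
    intro x hx
    set S := Finset.univ.filter (fun v => x v ≠ 0) with hSdef
    have hScard : S.card = w := by rw [hSdef, ← hammingNorm_filter, hx]
    have hxWS : x ∈ WS q n S := by
      rw [mem_WS]
      intro v
      rw [hSdef]
      simp
    set js := (φ S hScard).symm ⟨x, hxWS⟩ with hjs
    have hjmem : (js : Fin N) ∈ J S := js.2
    have hjword : wordOf q J φ (js : Fin N) S = x := by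
      rw [wordOf_eq q hScard hjmem]
      have : (⟨(js : Fin N), hjmem⟩ : {j // j ∈ J S}) = js := Subtype.ext rfl
      rw [this, hjs, Equiv.apply_symm_apply]
    have hjmem' : ∃ b : Fin k, A (js : Fin N) b.castSucc = S := by
      have h1 := hjmem
      simp only [hJdef, Finset.mem_filter, Finset.mem_univ, true_and] at h1
      exact h1
    obtain ⟨b, hb⟩ := hjmem'
    refine ⟨C (js : Fin N), Finset.mem_image.mpr ⟨(js : Fin N), Finset.mem_univ _, rfl⟩, ?_⟩
    rw [hCdef]
    simp only [Finset.mem_image, Finset.mem_univ, true_and]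
    exact ⟨b, by rw [hb, hjword]⟩


lemma card_H (q n w : ℕ) (hq : 2 ≤ q) :
    haveI : NeZero q := ⟨by omega⟩
    (Finset.univ.filter (fun x : Fin n → ZMod q => hammingNorm x = w)).card
      = (q - 1) ^ w * Nat.choose n w := by
  classical
  haveI : NeZero q := ⟨by omega⟩
  have hbi : Finset.univ.filter (fun x : Fin n → ZMod q => hammingNorm x = w)
      = ((Finset.univ : Finset (Fin n)).powersetCard w).biUnion (WS q n) := by
    ext x
    simp only [Finset.mem_filter, Finset.mem_univ, true_and, Finset.mem_biUnion,
      Finset.mem_powersetCard]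
    constructor
    · intro hx
      refine ⟨Finset.univ.filter (fun v => x v ≠ 0), ⟨Finset.filter_subset _ _, ?_⟩, ?_⟩
      · rw [← hammingNorm_filter, hx]
      · rw [mem_WS]; intro v; simp
    · rintro ⟨S, ⟨_, hcard⟩, hxS⟩
      rw [norm_of_mem_WS hxS, hcard]
  rw [hbi, Finset.card_biUnion]
  · rw [Finset.sum_congr rfl (fun S hS => by
      rw [card_WS hq S, (Finset.mem_powersetCard.mp hS).2])]
    rw [Finset.sum_const, Finset.card_powersetCard, Finset.card_univ, Fintype.card_fin,
      smul_eq_mul, mul_comm]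
  · intro S hS S' hS' hne
    rw [Function.onFun, Finset.disjoint_left]
    intro x hx hx'
    exact hne (by rw [← supp_eq_of_mem_WS hx, ← supp_eq_of_mem_WS hx'])

lemma forward (q n w : ℕ) (hq : 2 ≤ q) (hw : 1 ≤ w) (hwn : w ≤ n)
    (P : Finset (Finset (Fin n → ZMod q)))
    (h1 : ∀ C ∈ P, C.card = n / w ∧ (∀ x ∈ C, hammingNorm x = w) ∧
          ∀ x ∈ C, ∀ y ∈ C, x ≠ y → ∀ i, x i = 0 ∨ y i = 0)
    (h2 : ∀ C ∈ P, ∀ D ∈ P, C ≠ D → Disjoint C D)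
    (h3 : ∀ x : Fin n → ZMod q, hammingNorm x = w → ∃ C ∈ P, x ∈ C) :
    n / w ∣ (q - 1) ^ w * Nat.choose n w := by
  classical
  haveI : NeZero q := ⟨by omega⟩
  have hH : Finset.univ.filter (fun x : Fin n → ZMod q => hammingNorm x = w)
      = P.biUnion (fun C => C) := by
    ext x
    simp only [Finset.mem_filter, Finset.mem_univ, true_and, Finset.mem_biUnion]
    constructor
    · intro hx; exact h3 x hx
    · rintro ⟨C, hC, hxC⟩
      exact (h1 C hC).2.1 x hxC
  have hcard := card_H q n w hq
  rw [hH, Finset.card_biUnion (fun C hC D hD hne => h2 C hC D hD hne)] at hcard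
  rw [Finset.sum_congr rfl (fun C hC => (h1 C hC).1), Finset.sum_const, smul_eq_mul] at hcard
  exact ⟨P.card, by rw [← hcard, mul_comm]⟩

end Stmt6Aux

/-- Tiling `TOC_q(n,2w,w)`: `H_q(n,w)` can be partitioned into pairwise
disjoint codes, each consisting of `⌊n/w⌋` words with pairwise disjoint
supports (optimal `(n,2w,w)_q`-codes), iff `⌊n/w⌋ ∣ (q-1)^w · C(n,w)`. -/
theorem stmt6 (q n w : ℕ) (hq : 2 ≤ q) (hw : 1 ≤ w) (hwn : w ≤ n) :
    (∃ P : Finset (Finset (Fin n → ZMod q)),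
        (∀ C ∈ P, C.card = n / w ∧ (∀ x ∈ C, hammingNorm x = w) ∧
          ∀ x ∈ C, ∀ y ∈ C, x ≠ y → ∀ i, x i = 0 ∨ y i = 0) ∧
        (∀ C ∈ P, ∀ D ∈ P, C ≠ D → Disjoint C D) ∧
        ∀ x : Fin n → ZMod q, hammingNorm x = w → ∃ C ∈ P, x ∈ C) ↔
      n / w ∣ (q - 1) ^ w * Nat.choose n w := by
  constructor
  · rintro ⟨P, h1, h2, h3⟩
    exact Stmt6Aux.forward q n w hq hw hwn P h1 h2 h3
  · intro hdvd
    exact Stmt6Aux.reverse q n w hq hw hwn hdvd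
end

section
/- A partition of the set of all binary weight-3 words of length n into optimal (n,6,3)_2-codes (i.e., a TOC_2(n,6,3)) exists if and only if n ≥ 3 and n ≢ 1 (mod 6). -/
open Finset

namespace TOC7

variable {n : ℕ}

/-- indicator vector of a finset -/
def vec (S : Finset (Fin n)) : Fin n → ZMod 2 := fun i => if i ∈ S then 1 else 0

lemma zmod2_cases (a : ZMod 2) : a = 0 ∨ a = 1 := by revert a; decide

lemma vec_injective : Function.Injective (vec (n := n)) := by
  intro S T h
  ext i
  have := congrFun h i
  by_cases hS : i ∈ S <;> by_cases hT : i ∈ T <;> simp_all [vec]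

lemma hammingNorm_vec (S : Finset (Fin n)) : hammingNorm (vec S) = S.card := by
  unfold hammingNorm
  congr 1
  ext i
  by_cases h : i ∈ S <;> simp [vec, h]

lemma vec_supp (x : Fin n → ZMod 2) : vec {i | x i ≠ 0} = x := by
  ext i
  rcases zmod2_cases (x i) with h | h <;> simp [vec, h]

lemma hammingDist_vec (S T : Finset (Fin n)) (hS : S.card = 3) (hT : T.card = 3)
    (hd : Disjoint S T) : hammingDist (vec S) (vec T) = 6 := by
  unfold hammingDist
  have : ({i | vec S i ≠ vec T i} : Finset (Fin n)) = S ∪ T := by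
    ext i
    by_cases h1 : i ∈ S <;> by_cases h2 : i ∈ T
    · exact absurd (hd.forall_ne_finset h1 h2) (by simp)
    all_goals rw [Finset.mem_filter]; simp [vec, h1, h2]
  rw [this, card_union_of_disjoint hd, hS, hT]

lemma card_weight3 : (({x | hammingNorm x = 3} : Finset (Fin n → ZMod 2))).card
    = n.choose 3 := by
  have h1 : (Finset.powersetCard 3 (univ : Finset (Fin n))).card = n.choose 3 := by
    rw [Finset.card_powersetCard, Finset.card_univ, Fintype.card_fin]
  rw [← h1]
  apply Finset.card_bij' (fun x _ => ({i | x i ≠ 0} : Finset (Fin n)))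
      (fun S _ => vec S)
  · intro x hx
    simp only [mem_filter, mem_univ, true_and] at hx
    simp [Finset.mem_powersetCard, ← hx, hammingNorm]
  · intro S hS
    simp only [Finset.mem_powersetCard] at hS
    simp [hammingNorm_vec, hS.2]
  · intro x _
    exact vec_supp x
  · intro S _
    apply vec_injective
    rw [vec_supp]

lemma choose_two (m : ℕ) : 2 * ((m+1).choose 2) = (m+1) * m := by
  induction m with
  | zero => decide
  | succ m ih =>
    rw [Nat.choose_succ_succ (m+1) 1]
    rw [Nat.mul_add, ih, Nat.choose_one_right]
    ring

lemma choose_three (m : ℕ) : 6 * ((m+2).choose 3) = (m+2) * (m+1) * m := by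
  induction m with
  | zero => decide
  | succ m ih =>
    rw [Nat.choose_succ_succ (m+2) 2]
    have : (6 : ℕ) * ((m+2).choose 2) = 3 * (2 * ((m+1+1).choose 2)) := by ring_nf
    rw [Nat.mul_add, ih, this, choose_two]
    ring


/-! ## The Baranyai-type machinery -/

/-- degree of a point in a multiset of finsets -/
def deg (A : Multiset (Finset (Fin n))) (x : Fin n) : ℕ :=
  Multiset.card (A.filter (x ∈ ·))

/-- number of covered points, with multiplicity -/
def cov (A : Multiset (Finset (Fin n))) : ℕ := (A.map Finset.card).sum

/-- The invariant for the inductive construction: `A` is a family of `s` classes,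
each a multiset of `t` subsets of `{0,...,m-1} ⊆ Fin n` of size `≤ k`, pairwise
disjoint within a class, every subset `S` occurring `C(n-m, k-|S|)` times overall,
and each class covering at least `m - r` points. -/
structure Good (n k t r s m : ℕ) (A : Fin s → Multiset (Finset (Fin n))) : Prop where
  card_eq : ∀ i, Multiset.card (A i) = t
  mem_sub : ∀ i, ∀ S ∈ A i, (∀ x ∈ S, (x : ℕ) < m) ∧ S.card ≤ k
  count_eq : ∀ S : Finset (Fin n), (∀ x ∈ S, (x : ℕ) < m) → S.card ≤ k →
      (∑ i, (A i).count S) = (n - m).choose (k - S.card)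
  deg_le : ∀ i x, deg (A i) x ≤ 1
  cov_ge : ∀ i, m ≤ cov (A i) + r

lemma good_zero (n k t r s : ℕ) (hst : s * t = n.choose k) :
    Good n k t r s 0 (fun _ => Multiset.replicate t ∅) := by
  constructor
  · intro i; simp
  · intro i S hS
    rw [Multiset.eq_of_mem_replicate hS]
    simp
  · intro S hsub _
    have hS : S = ∅ := by
      apply Finset.eq_empty_iff_forall_notMem.2
      intro x hx
      exact absurd (hsub x hx) (by omega)
    subst hS
    simp [Multiset.count_replicate, hst]
  · intro i x
    have : (Multiset.replicate t (∅ : Finset (Fin n))).filter (x ∈ ·) = 0 :=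
      Multiset.filter_eq_nil.2 (fun S hS => by rw [Multiset.eq_of_mem_replicate hS]; simp)
    simp [deg, this]
  · intro i; omega

lemma cov_le (k : ℕ) (M : Multiset (Finset (Fin n))) (h : ∀ S ∈ M, S.card ≤ k) :
    ((M.map (fun S => k - S.card)).sum) + cov M = k * Multiset.card M := by
  unfold cov
  rw [← Multiset.sum_map_add]
  have : M.map (fun S => (k - S.card) + S.card) = M.map (fun _ => k) := by
    apply Multiset.map_congr rfl
    intro S hS
    have := h S hS
    omega
  rw [this, Multiset.map_const', Multiset.sum_replicate, smul_eq_mul, Nat.mul_comm]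


lemma deg_cons (a : Finset (Fin n)) (M : Multiset (Finset (Fin n))) (x : Fin n) :
    deg (a ::ₘ M) x = (if x ∈ a then 1 else 0) + deg M x := by
  unfold deg
  rw [Multiset.filter_cons, Multiset.card_add]
  split <;> simp

lemma deg_eq_zero (M : Multiset (Finset (Fin n))) (x : Fin n) (h : ∀ S ∈ M, x ∉ S) :
    deg M x = 0 := by
  unfold deg
  rw [Multiset.filter_eq_nil.2 h]
  rfl

lemma cov_cons (a : Finset (Fin n)) (M : Multiset (Finset (Fin n))) :
    cov (a ::ₘ M) = a.card + cov M := by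
  simp [cov]

/-- the set of possible "columns" at stage `m`: subsets of the first `m`
coordinates of size `< k` -/
def Cols (n k m : ℕ) : Finset (Finset (Fin n)) :=
  univ.filter fun S => (∀ x ∈ S, (x : ℕ) < m) ∧ S.card < k

lemma mem_Cols {n k m : ℕ} {S : Finset (Fin n)} :
    S ∈ Cols n k m ↔ (∀ x ∈ S, (x : ℕ) < m) ∧ S.card < k := by
  simp [Cols]

/-- column demand -/
def dem (n k m : ℕ) (S : Finset (Fin n)) : ℕ := (n - m - 1).choose (k - S.card - 1)

lemma cap_identity {n k m : ℕ} (hm : m < n) {S : Finset (Fin n)} (hS : S.card < k) :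
    (k - S.card) * ((n - m).choose (k - S.card)) = (n - m) * dem n k m S := by
  unfold dem
  obtain ⟨N', hN'⟩ : ∃ N', n - m - 1 = N' := ⟨n - m - 1, rfl⟩
  obtain ⟨j', hj'⟩ : ∃ j', k - S.card - 1 = j' := ⟨k - S.card - 1, rfl⟩
  rw [hN', hj', show n - m = N' + 1 by omega, show k - S.card = j' + 1 by omega]
  have key := Nat.add_one_mul_choose_eq N' j'
  rw [Nat.mul_comm (j' + 1) _, ← key]

set_option maxHeartbeats 2000000 in
lemma good_step {n k t r s m : ℕ} (A : Fin s → Multiset (Finset (Fin n)))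
    (hG : Good n k t r s m A) (hm : m < n) (hn : k * t + r = n) :
    ∃ A', Good n k t r s (m + 1) A' := by
  classical
  set mt : Fin s → ℕ := fun i => ((A i).map (fun S => k - S.card)).sum with hmt
  have hrow : ∀ i, mt i + cov (A i) = k * t := by
    intro i
    rw [hmt]
    simpa [hG.card_eq i] using cov_le k (A i) (fun S hS => (hG.mem_sub i S hS).2)
  have hrow2 : ∀ i, mt i + (cov (A i) + r - m) = n - m := by
    intro i
    have h1 := hrow i
    have h2 := hG.cov_ge i
    omega
  -- mt as a sum over columns
  have hmtCols : ∀ i, mt i = ∑ S ∈ Cols n k m, (A i).count S * (k - S.card) := by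
    intro i
    have hdef : mt i = ((A i).map (fun S => k - S.card)).sum := rfl
    rw [hdef, Finset.sum_multiset_map_count]
    simp only [smul_eq_mul]
    have h1 : ∑ S ∈ (A i).toFinset, (A i).count S * (k - S.card)
        = ∑ S ∈ (A i).toFinset ∪ Cols n k m, (A i).count S * (k - S.card) := by
      apply Finset.sum_subset Finset.subset_union_left
      intro S _ hS
      rw [Multiset.count_eq_zero_of_notMem (by simpa using hS), Nat.zero_mul]
    have h2 : ∑ S ∈ Cols n k m, (A i).count S * (k - S.card)
        = ∑ S ∈ (A i).toFinset ∪ Cols n k m, (A i).count S * (k - S.card) := by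
      apply Finset.sum_subset Finset.subset_union_right
      intro S hSU hS
      have hSA : S ∈ A i := by
        rcases Finset.mem_union.1 hSU with h | h
        · exact Multiset.mem_toFinset.1 h
        · exact absurd h hS
      have hsub := hG.mem_sub i S hSA
      have : ¬ S.card < k := fun hlt => hS (mem_Cols.2 ⟨hsub.1, hlt⟩)
      have : k - S.card = 0 := by omega
      simp [this]
    rw [h1, h2]
  have hcount : ∀ S ∈ Cols n k m, (∑ i, (A i).count S) = (n - m).choose (k - S.card) := by
    intro S hS
    rw [mem_Cols] at hS
    exact hG.count_eq S hS.1 (le_of_lt hS.2)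
  -- total column demand
  have hcolsum : (n - m) * (∑ S ∈ Cols n k m, dem n k m S) = ∑ i, mt i := by
    rw [Finset.mul_sum]
    rw [Finset.sum_congr rfl (fun S hS => (cap_identity hm (mem_Cols.1 hS).2).symm)]
    rw [Finset.sum_congr rfl (fun S hS => by rw [← hcount S hS, Finset.mul_sum])]
    rw [Finset.sum_comm]
    exact Finset.sum_congr rfl (fun i _ => by
      rw [hmtCols i]; exact Finset.sum_congr rfl (fun S _ => Nat.mul_comm _ _))
  have hmtle : ∀ i, mt i ≤ n - m := fun i => by have := hrow2 i; omega
  have hDle : (∑ S ∈ Cols n k m, dem n k m S) ≤ s := by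
    have h1 : (n - m) * (∑ S ∈ Cols n k m, dem n k m S) ≤ (n - m) * s := by
      rw [hcolsum]
      calc ∑ i, mt i ≤ ∑ _i : Fin s, (n - m) := Finset.sum_le_sum (fun i _ => hmtle i)
      _ = (n - m) * s := by simp [Nat.mul_comm]
    exact Nat.le_of_mul_le_mul_left h1 (by omega)
  set hdum : ℕ := s - ∑ S ∈ Cols n k m, dem n k m S with hh
  have hdummy : (n - m) * hdum = ∑ i, (cov (A i) + r - m) := by
    have h1 : ∑ i, (mt i + (cov (A i) + r - m)) = (n - m) * s := by
      rw [Finset.sum_congr rfl (fun i _ => hrow2 i)]; simp [Nat.mul_comm]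
    rw [Finset.sum_add_distrib] at h1
    have h2 : (n - m) * hdum = (n - m) * s - (n - m) * (∑ S ∈ Cols n k m, dem n k m S) := by
      rw [hh, Nat.mul_sub]
    omega
  -- the bipartite graph for Hall's theorem
  set cap : Option (Finset (Fin n)) → ℕ := fun o => o.elim hdum (dem n k m) with hcap
  set slotF : Option (Finset (Fin n)) → Finset (Option (Finset (Fin n)) × ℕ) :=
    fun o => {o} ×ˢ Finset.range (cap o) with hslot
  have slot_card : ∀ o, (slotF o).card = cap o := by
    intro o; rw [hslot]; simp
  have slot_disj : ∀ o o', o ≠ o' → Disjoint (slotF o) (slotF o') := by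
    intro o o' hne
    rw [Finset.disjoint_left]
    intro a ha ha'
    rw [hslot] at ha ha'
    simp only [Finset.mem_product, Finset.mem_singleton] at ha ha'
    exact hne (ha.1 ▸ ha'.1 ▸ rfl)
  have slot_biUnion_card : ∀ C : Finset (Option (Finset (Fin n))),
      (C.biUnion slotF).card = ∑ o ∈ C, cap o := by
    intro C
    rw [Finset.card_biUnion (fun o _ o' _ h => slot_disj o o' h)]
    exact Finset.sum_congr rfl (fun o _ => slot_card o)
  set colsOf : Fin s → Finset (Option (Finset (Fin n))) := fun i =>
    ((A i).toFinset.filter (fun S => S.card < k)).image some ∪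
      (if m + 1 ≤ cov (A i) + r then {none} else ∅) with hcolsOf
  have mem_colsOf_some : ∀ i S, some S ∈ colsOf i ↔ (S ∈ A i ∧ S.card < k) := by
    intro i S
    rw [hcolsOf]
    simp only [Finset.mem_union, Finset.mem_image, Finset.mem_filter, Multiset.mem_toFinset]
    constructor
    · rintro (⟨T, ⟨hT1, hT2⟩, hTS⟩ | hno)
      · cases hTS; exact ⟨hT1, hT2⟩
      · split at hno <;> simp_all
    · intro hS; exact Or.inl ⟨S, ⟨hS.1, hS.2⟩, rfl⟩
  have mem_colsOf_none : ∀ i, none ∈ colsOf i ↔ m + 1 ≤ cov (A i) + r := by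
    intro i
    rw [hcolsOf]
    simp only [Finset.mem_union, Finset.mem_image, Finset.mem_filter]
    constructor
    · rintro (⟨T, _, hTS⟩ | hno)
      · exact absurd hTS (by simp)
      · split at hno <;> simp_all
    · intro h; right; simp [h]
  have colsOf_some_Cols : ∀ i S, some S ∈ colsOf i → S ∈ Cols n k m := by
    intro i S hS
    rw [mem_colsOf_some] at hS
    exact mem_Cols.2 ⟨(hG.mem_sub i S hS.1).1, hS.2⟩
  set nbr : Fin s → Finset (Option (Finset (Fin n)) × ℕ) :=
    fun i => (colsOf i).biUnion slotF with hnbr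
  -- Hall's condition
  have hall : ∀ I : Finset (Fin s), I.card ≤ (I.biUnion nbr).card := by
    intro I
    have hb : I.biUnion nbr = (I.biUnion colsOf).biUnion slotF := by
      rw [hnbr]
      exact (Finset.biUnion_biUnion I colsOf slotF).symm
    rw [hb, slot_biUnion_card]
    set CI := I.biUnion colsOf with hCI
    set ColsI := (Cols n k m).filter (fun S => some S ∈ CI) with hColsI
    have hCIdec : CI = ColsI.image some ∪ (if none ∈ CI then {none} else ∅) := by
      ext o
      cases o with
      | none =>
        by_cases hnn : (none : Option (Finset (Fin n))) ∈ CI <;>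
          simp [hnn, Finset.mem_union, Finset.mem_image]
      | some S =>
        simp only [Finset.mem_union, Finset.mem_image, hColsI, Finset.mem_filter]
        constructor
        · intro hS
          left
          refine ⟨S, ⟨?_, hS⟩, rfl⟩
          obtain ⟨i, _, hi⟩ := Finset.mem_biUnion.1 hS
          exact colsOf_some_Cols i S hi
        · rintro (⟨T, ⟨_, hT⟩, hTS⟩ | hno)
          · cases hTS; exact hT
          · exfalso
            split at hno
            · exact Option.some_ne_none _ (Finset.mem_singleton.1 hno)
            · exact Finset.notMem_empty _ hno
    have hdisj : Disjoint (ColsI.image some)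
        (if (none : Option (Finset (Fin n))) ∈ CI then {none} else ∅) := by
      rw [Finset.disjoint_left]
      intro a ha ha'
      rw [Finset.mem_image] at ha
      obtain ⟨T, _, hT⟩ := ha
      split at ha'
      · rw [Finset.mem_singleton] at ha'
        rw [ha'] at hT
        exact Option.some_ne_none _ hT
      · exact Finset.notMem_empty _ ha'
    have hsum_cap : ∑ o ∈ CI, cap o
        = ∑ S ∈ ColsI, dem n k m S + (if none ∈ CI then hdum else 0) := by
      rw [hCIdec, Finset.sum_union hdisj]
      congr 1
      · rw [Finset.sum_image (fun a _ b _ h => Option.some_injective _ h)]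
        exact Finset.sum_congr rfl (fun S _ => by simp [hcap])
      · split <;> simp [hcap]
    rw [hsum_cap]
    have hpos : 0 < n - m := by omega
    refine Nat.le_of_mul_le_mul_left ?_ hpos
    have hreal : ∑ i ∈ I, mt i ≤ ∑ S ∈ ColsI, (n - m) * dem n k m S := by
      have e1 : ∑ i ∈ I, mt i
          = ∑ S ∈ Cols n k m, ∑ i ∈ I, (A i).count S * (k - S.card) := by
        rw [Finset.sum_congr rfl (fun i _ => hmtCols i), Finset.sum_comm]
      have e2 : ∑ S ∈ Cols n k m, ∑ i ∈ I, (A i).count S * (k - S.card)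
          = ∑ S ∈ ColsI, ∑ i ∈ I, (A i).count S * (k - S.card) := by
        symm
        apply Finset.sum_subset (Finset.filter_subset _ _)
        intro S hS hSno
        apply Finset.sum_eq_zero
        intro i hi
        rcases Nat.eq_zero_or_pos ((A i).count S) with h0 | h0
        · rw [h0, Nat.zero_mul]
        · exfalso
          apply hSno
          rw [Finset.mem_filter]
          refine ⟨hS, Finset.mem_biUnion.2 ⟨i, hi, ?_⟩⟩
          exact (mem_colsOf_some i S).2 ⟨Multiset.count_pos.1 h0, (mem_Cols.1 hS).2⟩
      rw [e1, e2]
      apply Finset.sum_le_sum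
      intro S hS
      have hSc := Finset.mem_filter.1 hS
      calc ∑ i ∈ I, (A i).count S * (k - S.card)
          ≤ ∑ i, (A i).count S * (k - S.card) :=
            Finset.sum_le_sum_of_subset (Finset.subset_univ I)
        _ = (∑ i, (A i).count S) * (k - S.card) := by rw [Finset.sum_mul]
        _ = (n - m) * dem n k m S := by
            rw [hcount S hSc.1, Nat.mul_comm, cap_identity hm (mem_Cols.1 hSc.1).2]
    have hdumb : ∑ i ∈ I, (cov (A i) + r - m) ≤ (if none ∈ CI then (n - m) * hdum else 0) := by
      by_cases hnn : (none : Option (Finset (Fin n))) ∈ CI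
      · rw [if_pos hnn, hdummy]
        exact Finset.sum_le_sum_of_subset (Finset.subset_univ I)
      · rw [if_neg hnn]
        apply Nat.le_of_eq
        apply Finset.sum_eq_zero
        intro i hi
        have : (none : Option (Finset (Fin n))) ∉ colsOf i := by
          intro hc
          exact hnn (Finset.mem_biUnion.2 ⟨i, hi, hc⟩)
        rw [mem_colsOf_none] at this
        omega
    calc (n - m) * I.card = ∑ i ∈ I, (n - m) := by simp [Nat.mul_comm]
      _ = ∑ i ∈ I, (mt i + (cov (A i) + r - m)) :=
          Finset.sum_congr rfl (fun i _ => (hrow2 i).symm)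
      _ = ∑ i ∈ I, mt i + ∑ i ∈ I, (cov (A i) + r - m) := Finset.sum_add_distrib
      _ ≤ ∑ S ∈ ColsI, (n - m) * dem n k m S + (if none ∈ CI then (n - m) * hdum else 0) :=
          Nat.add_le_add hreal hdumb
      _ = (n - m) * (∑ S ∈ ColsI, dem n k m S + (if none ∈ CI then hdum else 0)) := by
          rw [Nat.mul_add, Finset.mul_sum]
          congr 1
          split <;> simp
  obtain ⟨f, hfinj, hfmem⟩ := (Finset.all_card_le_biUnion_card_iff_exists_injective nbr).1 hall
  have hslotmem : ∀ (o : Option (Finset (Fin n))) (a : Option (Finset (Fin n)) × ℕ),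
      a ∈ slotF o ↔ (a.1 = o ∧ a.2 < cap o) := by
    intro o a
    rw [hslot]
    simp only [Finset.mem_product, Finset.mem_singleton, Finset.mem_range]
  have hf1 : ∀ i, (f i).1 ∈ colsOf i := by
    intro i
    obtain ⟨o, ho, hfo⟩ := Finset.mem_biUnion.1 (hfmem i)
    rw [hslotmem] at hfo
    rwa [hfo.1]
  have hf2 : ∀ i, (f i).2 < cap ((f i).1) := by
    intro i
    obtain ⟨o, ho, hfo⟩ := Finset.mem_biUnion.1 (hfmem i)
    rw [hslotmem] at hfo
    rw [hfo.1]
    exact hfo.2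
  set AllCols : Finset (Option (Finset (Fin n))) := (Cols n k m).image some ∪ {none}
    with hAllCols
  have hAll : ∀ i, (f i).1 ∈ AllCols := by
    intro i
    rw [hAllCols]
    rcases h : (f i).1 with _ | S
    · exact Finset.mem_union_right _ (Finset.mem_singleton_self _)
    · apply Finset.mem_union_left
      apply Finset.mem_image_of_mem
      apply colsOf_some_Cols i
      rw [← h]
      exact hf1 i
  set fib : Option (Finset (Fin n)) → Finset (Fin s) :=
    fun o => univ.filter (fun i => (f i).1 = o) with hfib
  have hmemfib : ∀ o i, i ∈ fib o → (f i).1 = o := by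
    intro o i hi
    rw [hfib] at hi
    exact (Finset.mem_filter.1 hi).2
  have hfibcard : ∀ o, (fib o).card ≤ cap o := by
    intro o
    have : (fib o).card ≤ (Finset.range (cap o)).card := by
      apply Finset.card_le_card_of_injOn (fun i => (f i).2)
      · intro i hi
        rw [Finset.mem_coe, Finset.mem_range, ← hmemfib o i hi]
        exact hf2 i
      · intro i hi j hj hij
        apply hfinj
        exact Prod.ext ((hmemfib o i (Finset.mem_coe.1 hi)).trans
          (hmemfib o j (Finset.mem_coe.1 hj)).symm) hij
    simpa using this
  have hAllDisj : Disjoint ((Cols n k m).image some)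
      ({none} : Finset (Option (Finset (Fin n)))) := by
    rw [Finset.disjoint_right]
    intro a ha
    rw [Finset.mem_singleton] at ha
    subst ha
    intro hc
    obtain ⟨T, _, hT⟩ := Finset.mem_image.1 hc
    exact Option.some_ne_none _ hT
  have hcapsum : ∑ o ∈ AllCols, cap o = s := by
    rw [hAllCols, Finset.sum_union hAllDisj,
      Finset.sum_image (fun a _ b _ h => Option.some_injective _ h), Finset.sum_singleton]
    have e1 : ∑ S ∈ Cols n k m, cap (some S) = ∑ S ∈ Cols n k m, dem n k m S :=
      Finset.sum_congr rfl (fun S _ => by simp [hcap])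
    have e2 : cap none = hdum := by simp [hcap]
    rw [e1, e2, hh]
    omega
  have hfibsum : ∑ o ∈ AllCols, (fib o).card = s := by
    rw [hfib]
    rw [← Finset.card_eq_sum_card_fiberwise (fun i _ => hAll i)]
    simp
  have hfib_eq : ∀ o ∈ AllCols, (fib o).card = cap o :=
    (Finset.sum_eq_sum_iff_of_le (fun o _ => hfibcard o)).1 (hfibsum.trans hcapsum.symm)
  have hfib_Cols : ∀ S ∈ Cols n k m, (fib (some S)).card = dem n k m S := by
    intro S hS
    have h1 := hfib_eq (some S)
      (by rw [hAllCols]; exact Finset.mem_union_left _ (Finset.mem_image_of_mem _ hS))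
    rw [h1]
    simp [hcap]
  have hfib_not_Cols : ∀ S : Finset (Fin n), S ∉ Cols n k m → fib (some S) = ∅ := by
    intro S hS
    rw [hfib, Finset.filter_eq_empty_iff]
    intro i _
    intro hc
    apply hS
    apply colsOf_some_Cols i
    rw [← hc]
    exact hf1 i
  -- the new family
  set x0 : Fin n := ⟨m, hm⟩ with hx0
  set A' : Fin s → Multiset (Finset (Fin n)) :=
    fun i => ((f i).1).elim (A i) (fun S => insert x0 S ::ₘ (A i).erase S) with hA'
  have hx0S : ∀ i, ∀ S ∈ A i, x0 ∉ S := by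
    intro i S hS hc
    have := (hG.mem_sub i S hS).1 x0 hc
    rw [hx0] at this
    exact absurd this (by simp)
  have hcase : ∀ i, ((f i).1 = none ∧ A' i = A i ∧ m + 1 ≤ cov (A i) + r) ∨
      (∃ S, (f i).1 = some S ∧ S ∈ A i ∧ S.card < k ∧
        A' i = insert x0 S ::ₘ (A i).erase S) := by
    intro i
    rcases h : (f i).1 with _ | S
    · left
      have hc := hf1 i
      rw [h, mem_colsOf_none] at hc
      refine ⟨rfl, ?_, hc⟩
      rw [hA']
      simp only [h]
      rfl
    · right
      have hc := hf1 i
      rw [h, mem_colsOf_some] at hc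
      refine ⟨S, rfl, hc.1, hc.2, ?_⟩
      rw [hA']
      simp only [h]
      rfl
  refine ⟨A', ?_⟩
  constructor
  · -- card_eq
    intro i
    rcases hcase i with ⟨_, hAe, _⟩ | ⟨S, _, hSmem, _, hAe⟩
    · rw [hAe]; exact hG.card_eq i
    · rw [hAe, Multiset.card_cons, Multiset.card_erase_of_mem hSmem, hG.card_eq i,
        Nat.pred_eq_sub_one]
      have ht : 0 < t := by
        rw [← hG.card_eq i]
        exact Multiset.card_pos.2
          (fun h0 => by rw [h0] at hSmem; exact Multiset.notMem_zero S hSmem)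
      omega
  · -- mem_sub
    intro i S' hS'
    rcases hcase i with ⟨_, hAe, _⟩ | ⟨S, _, hSmem, hSk, hAe⟩
    · rw [hAe] at hS'
      obtain ⟨h1, h2⟩ := hG.mem_sub i S' hS'
      exact ⟨fun x hx => by have := h1 x hx; omega, h2⟩
    · rw [hAe, Multiset.mem_cons] at hS'
      rcases hS' with rfl | hS'
      · constructor
        · intro x hx
          rcases Finset.mem_insert.1 hx with rfl | hx
          · exact Nat.lt_succ_self m
          · have := (hG.mem_sub i S hSmem).1 x hx
            omega
        · rw [Finset.card_insert_of_notMem (hx0S i S hSmem)]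
          omega
      · obtain ⟨h1, h2⟩ := hG.mem_sub i S' (Multiset.mem_of_mem_erase hS')
        exact ⟨fun x hx => by have := h1 x hx; omega, h2⟩
  · -- count_eq
    intro T hTsub hTcard
    by_cases hxT : x0 ∈ T
    · -- `x0 ∈ T`
      set T' := T.erase x0 with hT'
      have hT'sub : ∀ x ∈ T', (x : ℕ) < m := by
        intro x hx
        obtain ⟨hxne, hxT2⟩ := Finset.mem_erase.1 hx
        have h1 := hTsub x hxT2
        have h2 : (x : ℕ) ≠ m := by
          intro hc
          exact hxne (Fin.ext (by rw [hx0]; exact hc))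
        omega
      have hTpos : 0 < T.card := Finset.card_pos.2 ⟨x0, hxT⟩
      have hT'card : T'.card + 1 = T.card := by
        rw [hT', Finset.card_erase_of_mem hxT]
        omega
      have hT'Cols : T' ∈ Cols n k m := mem_Cols.2 ⟨hT'sub, by omega⟩
      have hpoint : ∀ i, (A' i).count T = (if (f i).1 = some T' then 1 else 0) := by
        intro i
        have hnotin : T ∉ A i := by
          intro hc
          have := (hG.mem_sub i T hc).1 x0 hxT
          rw [hx0] at this
          exact absurd this (by simp)
        rcases hcase i with ⟨h1, hAe, _⟩ | ⟨S, h1, hSmem, hSk, hAe⟩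
        · rw [hAe, Multiset.count_eq_zero_of_notMem hnotin, h1]
          simp
        · rw [hAe, Multiset.count_cons]
          have hErase : ((A i).erase S).count T = 0 := by
            apply Multiset.count_eq_zero_of_notMem
            intro hc
            exact hnotin (Multiset.mem_of_mem_erase hc)
          rw [hErase, h1]
          have hiff : T = insert x0 S ↔ S = T' := by
            constructor
            · intro he
              rw [hT', he, Finset.erase_insert (hx0S i S hSmem)]
            · intro he
              rw [he, hT', Finset.insert_erase hxT]
          by_cases hST : S = T'
          · rw [if_pos (hiff.2 hST), if_pos (by rw [hST])]
          · rw [if_neg (fun hc => hST (hiff.1 hc)),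
              if_neg (fun hc => hST (Option.some_injective _ hc))]
      rw [Finset.sum_congr rfl (fun i _ => hpoint i)]
      have hsumite : (∑ i, if (f i).1 = some T' then 1 else 0) = (fib (some T')).card := by
        rw [hfib, Finset.card_filter]
      rw [hsumite, hfib_Cols T' hT'Cols]
      unfold dem
      congr 1 <;> omega
    · -- `x0 ∉ T`
      have hTm : ∀ x ∈ T, (x : ℕ) < m := by
        intro x hx
        have h1 := hTsub x hx
        have h2 : (x : ℕ) ≠ m := by
          intro hc
          apply hxT
          have hex : x = x0 := Fin.ext (by rw [hx0]; exact hc)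
          rwa [hex] at hx
        omega
      have hpoint : ∀ i,
          (A' i).count T + (if (f i).1 = some T then 1 else 0) = (A i).count T := by
        intro i
        rcases hcase i with ⟨h1, hAe, _⟩ | ⟨S, h1, hSmem, hSk, hAe⟩
        · rw [hAe, h1]
          simp
        · rw [hAe, h1, Multiset.count_cons]
          have hne : T ≠ insert x0 S := by
            intro hc
            exact hxT (hc ▸ Finset.mem_insert_self x0 S)
          rw [if_neg hne, Nat.add_zero]
          by_cases hST : S = T
          · subst hST
            rw [if_pos rfl, Multiset.count_erase_self]
            have : 0 < (A i).count S := Multiset.count_pos.2 hSmem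
            omega
          · rw [if_neg (fun hc : some S = some T => hST (Option.some_injective _ hc)),
              Multiset.count_erase_of_ne (fun hc => hST hc.symm), Nat.add_zero]
      have hsum : (∑ i, (A' i).count T) + (∑ i, if (f i).1 = some T then 1 else 0)
          = ∑ i, (A i).count T := by
        rw [← Finset.sum_add_distrib]
        exact Finset.sum_congr rfl (fun i _ => hpoint i)
      have hsumite : (∑ i, if (f i).1 = some T then 1 else 0) = (fib (some T)).card := by
        rw [hfib, Finset.card_filter]
      rw [hsumite] at hsum
      have hold := hG.count_eq T hTm hTcard
      by_cases hTk : T.card < k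
      · have hTCols : T ∈ Cols n k m := mem_Cols.2 ⟨hTm, hTk⟩
        rw [hfib_Cols T hTCols] at hsum
        have hpascal : (n - m).choose (k - T.card)
            = (n - (m+1)).choose (k - T.card) + dem n k m T := by
          unfold dem
          obtain ⟨N', hN'⟩ : ∃ N', n - m - 1 = N' := ⟨_, rfl⟩
          obtain ⟨j', hj'⟩ : ∃ j', k - T.card - 1 = j' := ⟨_, rfl⟩
          rw [hN', hj', show n - m = N' + 1 by omega, show k - T.card = j' + 1 by omega,
            show n - (m + 1) = N' by omega]
          rw [Nat.choose_succ_succ]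
          exact Nat.add_comm _ _
        rw [hold, hpascal] at hsum
        exact Nat.add_right_cancel hsum
      · have hfibT : fib (some T) = ∅ := hfib_not_Cols T (fun hc => hTk (mem_Cols.1 hc).2)
        rw [hfibT] at hsum
        simp only [Finset.card_empty, Nat.add_zero] at hsum
        have e1 : k - T.card = 0 := by omega
        rw [e1] at hold ⊢
        rw [Nat.choose_zero_right] at hold ⊢
        omega
  · -- deg_le
    intro i x
    rcases hcase i with ⟨_, hAe, _⟩ | ⟨S, _, hSmem, _, hAe⟩
    · rw [hAe]; exact hG.deg_le i x
    · rw [hAe, deg_cons]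
      have hAi : A i = S ::ₘ (A i).erase S := (Multiset.cons_erase hSmem).symm
      by_cases hx : x = x0
      · subst hx
        have hz : deg ((A i).erase S) x0 = 0 := by
          apply deg_eq_zero
          intro S' hS'
          exact hx0S i S' (Multiset.mem_of_mem_erase hS')
        rw [hz]
        split <;> omega
      · have hd := hG.deg_le i x
        rw [hAi, deg_cons] at hd
        have hins : (x ∈ insert x0 S) ↔ (x ∈ S) := by
          rw [Finset.mem_insert]
          exact ⟨fun h => h.resolve_left hx, Or.inr⟩
        rw [if_congr hins rfl rfl]
        exact hd
  · -- cov_ge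
    intro i
    rcases hcase i with ⟨_, hAe, hcov⟩ | ⟨S, _, hSmem, _, hAe⟩
    · rw [hAe]; exact hcov
    · rw [hAe, cov_cons, Finset.card_insert_of_notMem (hx0S i S hSmem)]
      have hAi : A i = S ::ₘ (A i).erase S := (Multiset.cons_erase hSmem).symm
      have h2 := hG.cov_ge i
      rw [hAi, cov_cons] at h2
      omega


lemma good_exists (n k t s : ℕ) (hkt : k * t ≤ n) (hst : s * t = n.choose k) :
    ∃ A : Fin s → Multiset (Finset (Fin n)), Good n k t (n - k * t) s n A := by
  suffices h : ∀ m, m ≤ n → ∃ A, Good n k t (n - k * t) s m A from h n le_rfl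
  intro m hm
  induction m with
  | zero => exact ⟨_, good_zero n k t _ s hst⟩
  | succ m ih =>
    obtain ⟨A, hA⟩ := ih (by omega)
    exact good_step A hA (by omega) (by omega)

lemma sufficiency (n t s : ℕ) (ht : 0 < t) (h3t : 3 * t ≤ n)
    (hst : s * t = n.choose 3) (h3n : 3 ≤ n) :
    ∃ P : Finset (Finset (Fin n → ZMod 2)),
        P.Nonempty ∧
        (∀ C ∈ P, C.Nonempty ∧ C.card = t ∧
          (∀ x ∈ C, hammingNorm x = 3) ∧
          ∀ x ∈ C, ∀ y ∈ C, x ≠ y → 6 ≤ hammingDist x y) ∧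
        (∀ C ∈ P, ∀ D ∈ P, C ≠ D → Disjoint C D) ∧
        ∀ x : Fin n → ZMod 2, hammingNorm x = 3 → ∃ C ∈ P, x ∈ C := by
  classical
  have hs : 0 < s := by
    rcases Nat.eq_zero_or_pos s with h0 | h0
    · exfalso
      have := Nat.choose_pos (show 3 ≤ n from h3n)
      rw [← hst, h0, Nat.zero_mul] at this
      omega
    · exact h0
  obtain ⟨A, hA⟩ := good_exists n 3 t s h3t hst
  have hcardk : ∀ i, ∀ S ∈ A i, S.card = 3 := by
    intro i S hS
    have h2 := (hA.mem_sub i S hS).2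
    by_contra hne
    have h0 := hA.count_eq S (fun x _ => x.isLt) h2
    rw [Nat.sub_self, Nat.choose_eq_zero_of_lt (by omega : (0:ℕ) < 3 - S.card)] at h0
    have hpos := Multiset.count_pos.2 hS
    have hle : (A i).count S ≤ ∑ j, (A j).count S :=
      Finset.single_le_sum (f := fun j => (A j).count S) (fun _ _ => Nat.zero_le _)
        (Finset.mem_univ i)
    omega
  have hcount1 : ∀ S : Finset (Fin n), S.card = 3 → (∑ i, (A i).count S) = 1 := by
    intro S hS
    have h0 := hA.count_eq S (fun x _ => x.isLt) (le_of_eq hS)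
    rw [Nat.sub_self, hS, Nat.sub_self, Nat.choose_zero_right] at h0
    exact h0
  have hnodup : ∀ i, (A i).Nodup := by
    intro i
    rw [Multiset.nodup_iff_count_le_one]
    intro S
    rcases Nat.eq_zero_or_pos ((A i).count S) with h0 | h0
    · omega
    · have h3 : S.card = 3 := hcardk i S (Multiset.count_pos.1 h0)
      have := hcount1 S h3
      have hle : (A i).count S ≤ ∑ j, (A j).count S :=
        Finset.single_le_sum (f := fun j => (A j).count S) (fun _ _ => Nat.zero_le _)
          (Finset.mem_univ i)
      omega
  have hdisjAB : ∀ i, ∀ S ∈ A i, ∀ T ∈ A i, S ≠ T → Disjoint S T := by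
    intro i S hS T hT hne
    rw [Finset.disjoint_left]
    intro x hxS hxT
    have hdeg := hA.deg_le i x
    have hmem1 : S ∈ (A i).filter (x ∈ ·) := Multiset.mem_filter.2 ⟨hS, hxS⟩
    have hmem2 : T ∈ (A i).filter (x ∈ ·) := Multiset.mem_filter.2 ⟨hT, hxT⟩
    have hnd : ((A i).filter (x ∈ ·)).Nodup := (hnodup i).filter _
    have hsub : ({S, T} : Finset (Finset (Fin n))) ⊆ ((A i).filter (x ∈ ·)).toFinset := by
      intro y hy
      rcases Finset.mem_insert.1 hy with rfl | hy
      · exact Multiset.mem_toFinset.2 hmem1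
      · rw [Finset.mem_singleton] at hy
        subst hy
        exact Multiset.mem_toFinset.2 hmem2
    have hcard2 := Finset.card_le_card hsub
    rw [Finset.card_pair hne, Multiset.toFinset_card_of_nodup hnd] at hcard2
    unfold deg at hdeg
    omega
  set code : Fin s → Finset (Fin n → ZMod 2) := fun i => ((A i).toFinset).image vec
    with hcode
  have hcode_card : ∀ i, (code i).card = t := by
    intro i
    rw [hcode]
    rw [Finset.card_image_of_injective _ vec_injective,
      Multiset.toFinset_card_of_nodup (hnodup i), hA.card_eq i]
  have hmem_code : ∀ i x, x ∈ code i ↔ ∃ S ∈ A i, vec S = x := by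
    intro i x
    rw [hcode]
    simp [Finset.mem_image, Multiset.mem_toFinset]
  refine ⟨Finset.image code Finset.univ, ?_, ?_, ?_, ?_⟩
  · exact ⟨code ⟨0, hs⟩, Finset.mem_image_of_mem _ (Finset.mem_univ _)⟩
  · intro C hC
    obtain ⟨i, _, rfl⟩ := Finset.mem_image.1 hC
    refine ⟨?_, hcode_card i, ?_, ?_⟩
    · rw [← Finset.card_pos, hcode_card i]; exact ht
    · intro x hx
      obtain ⟨S, hS, rfl⟩ := (hmem_code i x).1 hx
      rw [hammingNorm_vec, hcardk i S hS]
    · intro x hx y hy hxy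
      obtain ⟨S, hS, rfl⟩ := (hmem_code i x).1 hx
      obtain ⟨T, hT, rfl⟩ := (hmem_code i y).1 hy
      have hST : S ≠ T := fun h => hxy (by rw [h])
      rw [hammingDist_vec S T (hcardk i S hS) (hcardk i T hT) (hdisjAB i S hS T hT hST)]
  · intro C hC D hD hCD
    obtain ⟨i, _, rfl⟩ := Finset.mem_image.1 hC
    obtain ⟨j, _, rfl⟩ := Finset.mem_image.1 hD
    have hij : i ≠ j := fun h => hCD (by rw [h])
    rw [Finset.disjoint_left]
    intro x hx hx'
    obtain ⟨S, hS, rfl⟩ := (hmem_code i x).1 hx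
    obtain ⟨T, hT, hTS⟩ := (hmem_code j _).1 hx'
    have hST : T = S := vec_injective hTS
    subst hST
    have h1 := hcount1 T (hcardk i T hS)
    have hle : ∑ l ∈ ({i, j} : Finset (Fin s)), (A l).count T ≤ ∑ l, (A l).count T :=
      Finset.sum_le_sum_of_subset (Finset.subset_univ _)
    rw [Finset.sum_pair hij] at hle
    have hp1 := Multiset.count_pos.2 hS
    have hp2 := Multiset.count_pos.2 hT
    omega
  · intro x hx
    set S : Finset (Fin n) := {i | x i ≠ 0} with hSdef
    have hS3 : S.card = 3 := hx
    have h1 := hcount1 S hS3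
    have : ∃ i, 0 < (A i).count S := by
      by_contra hc
      push_neg at hc
      have : (∑ i, (A i).count S) = 0 :=
        Finset.sum_eq_zero (fun i _ => by have := hc i; omega)
      omega
    obtain ⟨i, hi⟩ := this
    refine ⟨code i, Finset.mem_image_of_mem _ (Finset.mem_univ _), ?_⟩
    rw [hmem_code]
    exact ⟨S, Multiset.count_pos.1 hi, vec_supp x⟩


lemma div3 (n : ℕ) (h3 : 3 ≤ n) (h6 : n % 6 ≠ 1) : ∃ s, s * (n / 3) = n.choose 3 := by
  have h0 : n % 6 = 0 ∨ n % 6 = 2 ∨ n % 6 = 3 ∨ n % 6 = 4 ∨ n % 6 = 5 := by omega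
  rcases h0 with h | h | h | h | h
  · obtain ⟨p, rfl⟩ : ∃ p, n = 6*p+6 := ⟨(n-6)/6, by omega⟩
    refine ⟨(6*p+5)*(3*p+2), ?_⟩
    rw [show (6*p+6)/3 = 2*(p+1) by omega]
    have hch := choose_three (6*p+4)
    rw [show 6*p+4+2 = 6*p+6 by omega, show 6*p+4+1 = 6*p+5 by omega] at hch
    refine Nat.eq_of_mul_eq_mul_left (show 0 < 6 by norm_num) ?_
    rw [hch]
    ring
  · obtain ⟨p, rfl⟩ : ∃ p, n = 6*p+8 := ⟨(n-8)/6, by omega⟩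
    refine ⟨(3*p+4)*(6*p+7), ?_⟩
    rw [show (6*p+8)/3 = 2*(p+1) by omega]
    have hch := choose_three (6*p+6)
    rw [show 6*p+6+2 = 6*p+8 by omega, show 6*p+6+1 = 6*p+7 by omega] at hch
    refine Nat.eq_of_mul_eq_mul_left (show 0 < 6 by norm_num) ?_
    rw [hch]
    ring
  · obtain ⟨p, rfl⟩ : ∃ p, n = 6*p+3 := ⟨(n-3)/6, by omega⟩
    refine ⟨(3*p+1)*(6*p+1), ?_⟩
    rw [show (6*p+3)/3 = 2*p+1 by omega]
    have hch := choose_three (6*p+1)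
    rw [show 6*p+1+2 = 6*p+3 by omega, show 6*p+1+1 = 6*p+2 by omega] at hch
    refine Nat.eq_of_mul_eq_mul_left (show 0 < 6 by norm_num) ?_
    rw [hch]
    ring
  · obtain ⟨p, rfl⟩ : ∃ p, n = 6*p+4 := ⟨(n-4)/6, by omega⟩
    refine ⟨2*(3*p+2)*(3*p+1), ?_⟩
    rw [show (6*p+4)/3 = 2*p+1 by omega]
    have hch := choose_three (6*p+2)
    rw [show 6*p+2+2 = 6*p+4 by omega, show 6*p+2+1 = 6*p+3 by omega] at hch
    refine Nat.eq_of_mul_eq_mul_left (show 0 < 6 by norm_num) ?_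
    rw [hch]
    ring
  · obtain ⟨p, rfl⟩ : ∃ p, n = 6*p+5 := ⟨(n-5)/6, by omega⟩
    refine ⟨(6*p+5)*(3*p+2), ?_⟩
    rw [show (6*p+5)/3 = 2*p+1 by omega]
    have hch := choose_three (6*p+3)
    rw [show 6*p+3+2 = 6*p+5 by omega, show 6*p+3+1 = 6*p+4 by omega] at hch
    refine Nat.eq_of_mul_eq_mul_left (show 0 < 6 by norm_num) ?_
    rw [hch]
    ring

end TOC7

/-- A tiling `TOC_2(n,6,3)` — a partition of all binary weight-3 words of
length `n` into (nonempty) optimal `(n,6,3)_2`-codes, i.e. codes of size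
`⌊n/3⌋` with pairwise Hamming distance at least 6 — exists iff `n ≥ 3`
and `n ≢ 1 (mod 6)`. -/
theorem stmt7 (n : ℕ) :
    (∃ P : Finset (Finset (Fin n → ZMod 2)),
        P.Nonempty ∧
        (∀ C ∈ P, C.Nonempty ∧ C.card = n / 3 ∧
          (∀ x ∈ C, hammingNorm x = 3) ∧
          ∀ x ∈ C, ∀ y ∈ C, x ≠ y → 6 ≤ hammingDist x y) ∧
        (∀ C ∈ P, ∀ D ∈ P, C ≠ D → Disjoint C D) ∧
        ∀ x : Fin n → ZMod 2, hammingNorm x = 3 → ∃ C ∈ P, x ∈ C) ↔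
      3 ≤ n ∧ n % 6 ≠ 1 := by
  constructor
  · rintro ⟨P, hPne, hPcode, hPdisj, hPcov⟩
    have hn3 : 3 ≤ n := by
      by_contra hlt
      obtain ⟨C, hC⟩ := hPne
      obtain ⟨hCne, hCcard, -, -⟩ := hPcode C hC
      have h0 : n / 3 = 0 := by omega
      rw [h0, Finset.card_eq_zero] at hCcard
      rw [hCcard] at hCne
      exact Finset.not_nonempty_empty hCne
    refine ⟨hn3, ?_⟩
    intro hmod
    have hW : (({x | hammingNorm x = 3} : Finset (Fin n → ZMod 2))) = P.biUnion id := by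
      ext x
      simp only [Finset.mem_filter, Finset.mem_univ, true_and, Finset.mem_biUnion, id]
      constructor
      · exact fun h => hPcov x h
      · rintro ⟨C, hC, hxC⟩
        exact (hPcode C hC).2.2.1 x hxC
    have hcard := TOC7.card_weight3 (n := n)
    have hcb := Finset.card_biUnion (s := P) (t := (id : Finset (Fin n → ZMod 2) → _))
      (fun C hC D hD hne => hPdisj C hC D hD hne)
    rw [hW, hcb] at hcard
    have hsum : ∑ C ∈ P, (id C : Finset (Fin n → ZMod 2)).card = P.card * (n / 3) := by
      have h1 : ∑ C ∈ P, (id C : Finset (Fin n → ZMod 2)).card = ∑ _C ∈ P, (n/3) :=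
        Finset.sum_congr rfl (fun C hC => (hPcode C hC).2.1)
      rw [h1, Finset.sum_const, smul_eq_mul]
    rw [hsum] at hcard
    obtain ⟨p, rfl⟩ : ∃ p, n = 6*p+7 := ⟨(n-7)/6, by omega⟩
    set c := P.card with hc
    rw [show (6*p+7)/3 = 2*p+2 by omega] at hcard
    have hch := TOC7.choose_three (6*p+5)
    rw [show 6*p+5+2 = 6*p+7 by omega, show 6*p+5+1 = 6*p+6 by omega] at hch
    rw [← hcard] at hch
    have key : (6*(p+1)) * (2*c) = (6*(p+1)) * ((6*p+7)*(6*p+5)) := by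
      calc (6*(p+1)) * (2*c) = 6 * (c * (2*p+2)) := by ring
        _ = (6*p+7)*(6*p+6)*(6*p+5) := hch
        _ = (6*(p+1)) * ((6*p+7)*(6*p+5)) := by ring
    have hc2 : 2*c = (6*p+7)*(6*p+5) := Nat.eq_of_mul_eq_mul_left (by omega) key
    have hexp : (6*p+7)*(6*p+5) = 12*(3*(p*p) + 6*p) + 35 := by ring
    omega
  · rintro ⟨h3, h6⟩
    obtain ⟨s, hst⟩ := TOC7.div3 n h3 h6
    have ht : 0 < n / 3 := by omega
    have h3t : 3 * (n/3) ≤ n := by omega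
    exact TOC7.sufficiency n (n/3) s ht h3t hst h3
end

section
/- If there exists a Steiner system S(t,w',n) and a generalized Steiner system GS(t,w,w',g), then there exists a generalized Steiner system GS(t,w,n,g). -/
/-- `B` is a Steiner system `S(t,k,n)` on `Fin n`: all blocks have size `k`
and every `t`-subset lies in exactly one block. -/
def isSteiner (t k n : ℕ) (B : Finset (Finset (Fin n))) : Prop :=
  (∀ b ∈ B, b.card = k) ∧
  ∀ T : Finset (Fin n), T.card = t → ∃! b, b ∈ B ∧ T ⊆ b

/-- `C` is a generalized Steiner system `GS(t,w,n,g)`, in codeword form: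
a set of weight-`w` words of length `n` over `Z_{g+1}` with minimum Hamming
distance `2(w-t)+1` such that every assignment of nonzero values to `t`
distinct coordinates is extended by exactly one codeword. -/
def isGS (g t w n : ℕ) (C : Finset (Fin n → ZMod (g + 1))) : Prop :=
  (∀ x ∈ C, hammingNorm x = w) ∧
  (∀ x ∈ C, ∀ y ∈ C, x ≠ y → 2 * (w - t) + 1 ≤ hammingDist x y) ∧
  ∀ S : Finset (Fin n), S.card = t → ∀ f : Fin n → ZMod (g + 1),
    (∀ i ∈ S, f i ≠ 0) → ∃! x, x ∈ C ∧ ∀ i ∈ S, x i = f i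

/-!
Put a copy of the small code on every block of the Steiner system, reading the block in
increasing order and padding with zeros. Zero-padding along an injection preserves weights and
distances, so words on the same block keep the required distance. Two distinct blocks share fewer
than `t` points, hence words on distinct blocks have common support of size `< t` and differ in at
least `2(w - t) + 2` positions. Finally, `t` positions with prescribed nonzero values lie in a
unique block, and the copy of the small code on that block extends them in exactly one way.
-/

open Function Finset

section ExtendByZero

variable {ι κ R : Type*} {e : ι → κ}

theorem mem_range_of_extend_zero_ne_zero [Zero R] {x : ι → R} {i : κ}
    (h : extend e x 0 i ≠ 0) : i ∈ Set.range e := by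
  by_contra hi
  exact h (extend_apply' _ _ _ hi)

variable [Fintype ι] [Fintype κ] [DecidableEq R]

theorem hammingDist_extend (he : Injective e) (x y : ι → R) (z : κ → R) :
    hammingDist (extend e x z) (extend e y z) = hammingDist x y := by
  have hdiff : ({i | extend e x z i ≠ extend e y z i} : Finset κ) =
      ({j | x j ≠ y j} : Finset ι).map ⟨e, he⟩ := by
    ext i
    simp only [mem_filter, mem_univ, true_and, mem_map, Embedding.coeFn_mk]
    constructor
    · intro h
      by_cases hi : ∃ j, e j = i
      · obtain ⟨j, rfl⟩ := hi
        exact ⟨j, by simpa only [he.extend_apply] using h, rfl⟩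
      · exact absurd (by rw [extend_apply' _ _ _ hi, extend_apply' _ _ _ hi]) h
    · rintro ⟨j, hj, rfl⟩
      simpa only [he.extend_apply] using hj
  rw [hammingDist, hdiff, card_map, hammingDist]

variable [Zero R]

theorem hammingNorm_extend_zero (he : Injective e) (x : ι → R) :
    hammingNorm (extend e x 0) = hammingNorm x := by
  have h0 : extend e (0 : ι → R) 0 = 0 := extend_const e 0
  simpa only [h0, hammingDist_zero_right] using hammingDist_extend he x 0 0

/-- Positions where exactly one of `x`, `y` is nonzero count towards their distance. -/
theorem hammingNorm_add_hammingNorm_le (x y : ι → R) {s : Finset ι}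
    (hs : ∀ i, x i ≠ 0 → y i ≠ 0 → i ∈ s) :
    hammingNorm x + hammingNorm y ≤ hammingDist x y + 2 * #s := by
  classical
  rw [hammingNorm, hammingNorm, hammingDist]
  set sx : Finset ι := {i | x i ≠ 0}
  set sy : Finset ι := {i | y i ≠ 0}
  have hsub : sx \ sy ∪ sy \ sx ⊆ ({i | x i ≠ y i} : Finset ι) := by
    intro i
    simp only [sx, sy, mem_union, mem_sdiff, mem_filter, mem_univ, true_and]
    grind
  have hdisj := card_le_card hsub
  rw [card_union_of_disjoint disjoint_sdiff_sdiff] at hdisj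
  have hx := card_sdiff_add_card_inter sx sy
  have hy := card_sdiff_add_card_inter sy sx
  have hcommon : #(sx ∩ sy) ≤ #s := card_le_card fun i hi => by
    simp only [sx, sy, mem_inter, mem_filter] at hi
    exact hs i hi.1.2 hi.2.2
  rw [inter_comm] at hy
  omega

end ExtendByZero

namespace isSteiner

variable {t k n : ℕ} {B : Finset (Finset (Fin n))} {b b' : Finset (Fin n)}

theorem eq_of_subset (hB : isSteiner t k n B) {T : Finset (Fin n)} (hT : T.card = t)
    (hb : b ∈ B) (hb' : b' ∈ B) (hTb : T ⊆ b) (hTb' : T ⊆ b') : b = b' :=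
  (hB.2 T hT).unique ⟨hb, hTb⟩ ⟨hb', hTb'⟩

theorem card_inter_lt (hB : isSteiner t k n B) (hb : b ∈ B) (hb' : b' ∈ B) (hne : b ≠ b') :
    #(b ∩ b') < t := by
  by_contra! h
  obtain ⟨T, hTsub, hT⟩ := exists_subset_card_eq h
  exact hne (hB.eq_of_subset hT hb hb' (hTsub.trans inter_subset_left)
    (hTsub.trans inter_subset_right))

end isSteiner

section BlockCode

variable {t w k n : ℕ} {R : Type*} [Zero R]

theorem mem_of_extend_orderEmbOfFin_ne_zero {b : Finset (Fin n)} (hb : b.card = k)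
    {x : Fin k → R} {i : Fin n} (h : extend (b.orderEmbOfFin hb) x 0 i ≠ 0) : i ∈ b := by
  simpa using mem_range_of_extend_zero_ne_zero h

variable [DecidableEq R]

noncomputable def blockCode (B : Finset (Finset (Fin n))) (hB : ∀ b ∈ B, b.card = k)
    (C : Finset (Fin k → R)) : Finset (Fin n → R) :=
  B.attach.biUnion fun b => C.image fun x => extend (b.1.orderEmbOfFin (hB b.1 b.2)) x 0

variable {B : Finset (Finset (Fin n))} {C : Finset (Fin k → R)}

theorem mem_blockCode {hB : ∀ b ∈ B, b.card = k} {u : Fin n → R} :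
    u ∈ blockCode B hB C ↔
      ∃ b, ∃ hb : b ∈ B, ∃ x ∈ C, extend (b.orderEmbOfFin (hB b hb)) x 0 = u := by
  simp [blockCode]

theorem hammingNorm_of_mem_blockCode {hB : ∀ b ∈ B, b.card = k}
    (hC : ∀ x ∈ C, hammingNorm x = w) : ∀ u ∈ blockCode B hB C, hammingNorm u = w := by
  intro u hu
  obtain ⟨b, hb, x, hx, rfl⟩ := mem_blockCode.1 hu
  rw [hammingNorm_extend_zero (b.orderEmbOfFin _).injective, hC x hx]

theorem le_hammingDist_of_mem_blockCode (hB : isSteiner t k n B)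
    (hC : ∀ x ∈ C, hammingNorm x = w)
    (hCd : ∀ x ∈ C, ∀ y ∈ C, x ≠ y → 2 * (w - t) + 1 ≤ hammingDist x y) :
    ∀ u ∈ blockCode B hB.1 C, ∀ v ∈ blockCode B hB.1 C, u ≠ v →
      2 * (w - t) + 1 ≤ hammingDist u v := by
  intro u hu v hv huv
  have hu_norm := hammingNorm_of_mem_blockCode hC u hu
  have hv_norm := hammingNorm_of_mem_blockCode hC v hv
  obtain ⟨b, hb, x, hx, rfl⟩ := mem_blockCode.1 hu
  obtain ⟨b', hb', y, hy, rfl⟩ := mem_blockCode.1 hv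
  rcases eq_or_ne b b' with rfl | hne
  · rw [hammingDist_extend (b.orderEmbOfFin _).injective]
    exact hCd x hx y hy (by rintro rfl; exact huv rfl)
  · have := hammingNorm_add_hammingNorm_le (extend (b.orderEmbOfFin (hB.1 b hb)) x 0)
      (extend (b'.orderEmbOfFin (hB.1 b' hb')) y 0) (s := b ∩ b') fun i hxi hyi =>
      mem_inter.2 ⟨mem_of_extend_orderEmbOfFin_ne_zero _ hxi,
        mem_of_extend_orderEmbOfFin_ne_zero _ hyi⟩
    have := hB.card_inter_lt hb hb' hne
    have := hammingDist_pos.2 huv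
    omega

theorem existsUnique_mem_blockCode_extending (hB : isSteiner t k n B)
    (hC : ∀ S : Finset (Fin k), S.card = t → ∀ f : Fin k → R,
      (∀ i ∈ S, f i ≠ 0) → ∃! x, x ∈ C ∧ ∀ i ∈ S, x i = f i)
    {S : Finset (Fin n)} (hS : S.card = t) (f : Fin n → R) (hf : ∀ i ∈ S, f i ≠ 0) :
    ∃! u, u ∈ blockCode B hB.1 C ∧ ∀ i ∈ S, u i = f i := by
  obtain ⟨b, ⟨hb, hSb⟩, -⟩ := hB.2 S hS
  set e := b.orderEmbOfFin (hB.1 b hb)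
  obtain ⟨S', -, rfl⟩ : ∃ S' ⊆ univ, S = S'.map e.toEmbedding :=
    subset_map_iff.1 (by rwa [map_orderEmbOfFin_univ])
  obtain ⟨x, ⟨hx, hxf⟩, hx_unique⟩ :=
    hC S' (by rwa [card_map] at hS) (f ∘ e) fun j hj => hf _ (mem_map_of_mem _ hj)
  refine ⟨extend e x 0, ⟨mem_blockCode.2 ⟨b, hb, x, hx, rfl⟩, ?_⟩, ?_⟩
  · intro i hi
    obtain ⟨j, hj, rfl⟩ := mem_map.1 hi
    exact (e.injective.extend_apply x 0 j).trans (hxf j hj)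
  · rintro _ ⟨hu, huf⟩
    obtain ⟨b', hb', y, hy, rfl⟩ := mem_blockCode.1 hu
    obtain rfl : b = b' := hB.eq_of_subset hS hb hb' hSb
      fun i hi => mem_of_extend_orderEmbOfFin_ne_zero _ (huf i hi ▸ hf i hi)
    rw [hx_unique y ⟨hy, fun j hj =>
      (e.injective.extend_apply y 0 j).symm.trans (huf _ (mem_map_of_mem _ hj))⟩]

end BlockCode

theorem isGS_blockCode {g t w k n : ℕ} {B : Finset (Finset (Fin n))}
    {C : Finset (Fin k → ZMod (g + 1))} (hB : isSteiner t k n B) (hC : isGS g t w k C) :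
    isGS g t w n (blockCode B hB.1 C) :=
  ⟨hammingNorm_of_mem_blockCode hC.1, le_hammingDist_of_mem_blockCode hB hC.1 hC.2.1,
    fun _ hS => existsUnique_mem_blockCode_extending hB hC.2.2 hS⟩

/-- If there exists a Steiner system `S(t,w',n)` and a generalized Steiner
system `GS(t,w,w',g)`, then there exists a `GS(t,w,n,g)`. -/
theorem stmt10 (g t w w' n : ℕ)
    (hS : ∃ B : Finset (Finset (Fin n)), isSteiner t w' n B)
    (hG : ∃ C : Finset (Fin w' → ZMod (g + 1)), isGS g t w w' C) :
    ∃ C : Finset (Fin n → ZMod (g + 1)), isGS g t w n C := by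
  obtain ⟨B, hB⟩ := hS
  obtain ⟨C, hC⟩ := hG
  exact ⟨blockCode B hB.1 C, isGS_blockCode hB hC⟩
end

section
/- For every integer q ≥ 2, there exists a tiling TOC_q(4,4,3): the set of all weight-3 words of length 4 over Z_q can be partitioned into pairwise disjoint codes with minimum Hamming distance 4, each of size min{4, A}, where for q ≥ 4 each tile has size 4 (= A_q(4,4,3)). Explicitly for q ≥ 4 with g = q-1: for x,y,z ∈ [g], the code C_{x,y,z} = { {(1,x),(2,y),(3,z)}, {(1,x+1),(2,y+1),(4,w)}, {(1,x+2),(3,z+1),(4,w+2)}, {(2,y+2),(3,z+2),(4,w+1)} } with w ∈ [g] determined by x+y+z+w ≡ 0 (mod g) and all additions mod g taken in [g], and the g^3 codes C_{x,y,z} partition H_q(4,3), each with minimum distance 4. -/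
open Finset

section Hamming

variable {ι β : Type*} [Fintype ι] [DecidableEq β]

theorem hammingDist_eq_card_iff {x y : ι → β} :
    hammingDist x y = Fintype.card ι ↔ ∀ i, x i ≠ y i := by
  rw [hammingDist, ← card_univ, card_filter_eq_iff]
  simp

theorem hammingNorm_add_one_eq_card_iff [Zero β] {u : ι → β} :
    hammingNorm u + 1 = Fintype.card ι ↔ ∃ j, ∀ i, u i = 0 ↔ i = j := by
  have hsplit := card_filter_add_card_filter_not (s := univ) (fun i => u i ≠ 0)
  simp only [not_not, card_univ] at hsplit
  rw [hammingNorm, ← hsplit, Nat.add_left_cancel_iff, eq_comm, card_eq_one]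
  simp [Finset.ext_iff]

end Hamming

section ZeroPos

variable {ι β : Type*} [Nonempty ι] [Zero β]

noncomputable def zeroPos (u : ι → β) : ι :=
  Classical.epsilon fun j => u j = 0

theorem zeroPos_eq {u : ι → β} {j : ι} (h : ∀ i, u i = 0 ↔ i = j) :
    zeroPos u = j :=
  (h _).1 (Classical.epsilon_spec (p := fun j => u j = 0) ⟨j, (h j).2 rfl⟩)

end ZeroPos

theorem eq_of_sum_eq_of_forall_ne {ι M : Type*} [Fintype ι] [DecidableEq ι]
    [AddCancelCommMonoid M] {a b : ι → M} (j : ι) (hne : ∀ i, i ≠ j → a i = b i)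
    (hsum : ∑ i, a i = ∑ i, b i) : a = b := by
  have hrest : ∑ i ∈ univ.erase j, a i = ∑ i ∈ univ.erase j, b i :=
    sum_congr rfl fun i hi => hne i (ne_of_mem_erase hi)
  have hj : a j = b j := by
    rw [← add_sum_erase univ a (mem_univ j), ← add_sum_erase univ b (mem_univ j), hrest] at hsum
    exact add_right_cancel hsum
  funext i
  by_cases hi : i = j
  · exact hi ▸ hj
  · exact hne i hi

def IsTiling (q n d w m : ℕ) (P : Finset (Finset (Fin n → ZMod q))) : Prop :=
  (∀ C ∈ P, isCode q n d w C ∧ C.card = m) ∧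
  (∀ C ∈ P, ∀ D ∈ P, C ≠ D → Disjoint C D) ∧
  ∀ x : Fin n → ZMod q, hammingNorm x = w → ∃ C ∈ P, x ∈ C

section Codes

variable {q n d w : ℕ}

theorem exists_isTiling_of_classes [NeZero q] {m : ℕ}
    (f : (Fin n → ZMod q) → Finset (Fin n → ZMod q))
    (mem_self : ∀ u, hammingNorm u = w → u ∈ f u)
    (eq_of_mem : ∀ u, hammingNorm u = w → ∀ v ∈ f u, f v = f u)
    (isCode_card : ∀ u, hammingNorm u = w → isCode q n d w (f u) ∧ (f u).card = m) :
    ∃ P, IsTiling q n d w m P := by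
  refine ⟨(univ.filter (hammingNorm · = w)).image f, ?_, ?_, fun u hu => ?_⟩
  · simp only [mem_image, mem_filter, mem_univ, true_and]
    rintro _ ⟨u, hu, rfl⟩
    exact isCode_card u hu
  · simp only [mem_image, mem_filter, mem_univ, true_and]
    rintro _ ⟨u, hu, rfl⟩ _ ⟨v, hv, rfl⟩ hne
    refine disjoint_left.2 fun x hxu hxv => hne ?_
    rw [← eq_of_mem u hu x hxu]
    exact eq_of_mem v hv x hxv
  · exact ⟨f u, mem_image_of_mem f (by simpa using hu), mem_self u hu⟩

theorem maxA_eq_of_forall_card_le {m : ℕ} (C₀ : Finset (Fin n → ZMod q))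
    (hC₀ : isCode q n d w C₀) (hcard : C₀.card = m)
    (hle : ∀ C, isCode q n d w C → C.card ≤ m) : maxA q n d w = m :=
  IsGreatest.csSup_eq ⟨⟨C₀, hC₀, hcard⟩, by rintro _ ⟨C, hC, rfl⟩; exact hle C hC⟩

theorem isCode_singleton {u : Fin n → ZMod q} (hu : hammingNorm u = w) :
    isCode q n d w {u} :=
  ⟨by simpa using hu, by simp⟩

theorem exists_isTiling_singletons [NeZero q] : ∃ P, IsTiling q n d w 1 P :=
  exists_isTiling_of_classes (fun u => {u}) (fun u _ => mem_singleton_self u)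
    (fun _ _ _ hv => by rw [mem_singleton.1 hv])
    (fun u hu => ⟨isCode_singleton hu, card_singleton u⟩)

theorem isCode.mono {C D : Finset (Fin n → ZMod q)} (hC : isCode q n d w C) (hDC : D ⊆ C) :
    isCode q n d w D :=
  ⟨fun x hx => hC.1 x (hDC hx), fun x hx y hy => hC.2 x (hDC hx) y (hDC hy)⟩

theorem isCode.apply_ne {C : Finset (Fin n → ZMod q)} (hC : isCode q n n w C)
    {x y : Fin n → ZMod q} (hx : x ∈ C) (hy : y ∈ C) (hxy : x ≠ y) (i : Fin n) : x i ≠ y i := by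
  refine hammingDist_eq_card_iff.1 (le_antisymm ?_ ?_) i
  · exact hammingDist_le_card_fintype
  · simpa using hC.2 x hx y hy hxy

theorem isCode.apply_zeroPos {C : Finset (Fin (w + 1) → ZMod q)} (hC : isCode q (w + 1) d w C)
    {x : Fin (w + 1) → ZMod q} (hx : x ∈ C) : ∀ i, x i = 0 ↔ i = zeroPos x := by
  obtain ⟨j, hj⟩ := hammingNorm_add_one_eq_card_iff.1 (by rw [hC.1 x hx, Fintype.card_fin])
  rwa [zeroPos_eq hj]

theorem isCode.card_le {C : Finset (Fin (w + 1) → ZMod q)}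
    (hC : isCode q (w + 1) (w + 1) w C) : C.card ≤ w + 1 := by
  have hinj : Set.InjOn zeroPos (C : Set (Fin (w + 1) → ZMod q)) := fun x hx y hy hxy => by
    by_contra hne
    refine hC.apply_ne hx hy hne (zeroPos x) ?_
    rw [(hC.apply_zeroPos hx _).2 rfl, hxy, (hC.apply_zeroPos hy _).2 rfl]
  simpa using card_le_card_of_injOn zeroPos (fun _ _ => mem_coe.2 (mem_univ _)) hinj

theorem isCode.card_le_pred_of_card_le [NeZero q] {C : Finset (Fin (w + 1) → ZMod q)}
    (hC : isCode q (w + 1) (w + 1) w C) (hcard : C.card ≤ w) : C.card ≤ q - 1 := by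
  obtain ⟨k, -, hk⟩ := exists_mem_notMem_of_card_lt_card (s := C.image zeroPos) (t := univ)
    (by simpa using card_image_le.trans_lt (Nat.lt_succ_of_le hcard))
  have hnz : ∀ x ∈ C, x k ≠ 0 := fun x hx h0 =>
    hk (mem_image.2 ⟨x, hx, ((hC.apply_zeroPos hx k).1 h0).symm⟩)
  calc C.card ≤ (univ.erase (0 : ZMod q)).card :=
        card_le_card_of_injOn (· k) (fun x hx => mem_erase.2 ⟨hnz x hx, mem_univ _⟩)
          fun x hx y hy hxy => by_contra fun hne => hC.apply_ne hx hy hne k hxy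
    _ = q - 1 := by rw [card_erase_of_mem (mem_univ _), card_univ, ZMod.card]

theorem isCode.min_card_le [NeZero q] {C : Finset (Fin (w + 1) → ZMod q)}
    (hC : isCode q (w + 1) (w + 1) w C) : min C.card w ≤ q - 1 := by
  obtain ⟨S, hSC, hS⟩ := exists_subset_card_eq (min_le_left C.card w)
  rw [← hS]
  exact (hC.mono hSC).card_le_pred_of_card_le (hS ▸ min_le_right _ _)

end Codes

section OddAlphabet

variable {q : ℕ}

def pairing (u : Fin 4 → ZMod q) : Fin 4 → ZMod q :=
  if u 0 = 0 ∨ u 1 = 0 then ![u 1, u 0, -u 2, -u 3] else ![-u 0, -u 1, u 3, u 2]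

theorem pairing_pairing (u : Fin 4 → ZMod q) : pairing (pairing u) = u := by
  by_cases h : u 0 = 0 ∨ u 1 = 0
  · ext i; fin_cases i <;> simp [pairing, if_pos h, if_pos h.symm]
  · ext i; fin_cases i <;> simp [pairing, h]

theorem neg_eq_self_iff_of_odd (hq : Odd q) {a : ZMod q} : -a = a ↔ a = 0 := by
  rw [ZMod.neg_eq_self_iff, or_iff_left]
  exact fun h => Nat.not_even_iff_odd.2 hq ⟨a.val, by omega⟩

theorem hammingNorm_pairing_and_hammingDist (hq : Odd q) {u : Fin 4 → ZMod q}
    (hu : hammingNorm u = 3) :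
    hammingNorm (pairing u) = 3 ∧ hammingDist u (pairing u) = 4 := by
  obtain ⟨j, hj⟩ := hammingNorm_add_one_eq_card_iff.1 (by rw [hu]; rfl)
  have h0 := hj 0; have h1 := hj 1; have h2 := hj 2; have h3 := hj 3
  have hneg : ∀ a : ZMod q, a = -a ↔ a = 0 := fun a => eq_comm.trans (neg_eq_self_iff_of_odd hq)
  refine ⟨Nat.add_right_cancel (hammingNorm_add_one_eq_card_iff.2 ⟨![1, 0, 3, 2] j, fun i => ?_⟩),
    (hammingDist_eq_card_iff.2 fun i => ?_).trans (Fintype.card_fin 4)⟩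
  all_goals
    fin_cases j <;>
      simp only [Fin.isValue, Fin.zero_eta, Fin.mk_one, Fin.reduceFinMk, Fin.reduceEq,
        one_ne_zero, zero_ne_one, iff_true, iff_false] at h0 h1 h2 h3 <;>
      fin_cases i <;> simp [pairing, h0, h1, h2, h3, hneg, eq_comm (a := (0 : ZMod q))]

theorem isCode_pair (hq : Odd q) {u : Fin 4 → ZMod q} (hu : hammingNorm u = 3) :
    isCode q 4 4 3 {u, pairing u} ∧ ({u, pairing u} : Finset (Fin 4 → ZMod q)).card = 2 := by
  obtain ⟨hnorm, hdist⟩ := hammingNorm_pairing_and_hammingDist hq hu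
  have hne : u ≠ pairing u := hammingDist_ne_zero.1 (by omega)
  refine ⟨⟨?_, ?_⟩, card_pair hne⟩
  · simp only [mem_insert, mem_singleton]
    rintro x (rfl | rfl) <;> assumption
  · simp only [mem_insert, mem_singleton]
    rintro x (rfl | rfl) y (rfl | rfl) hxy
    · exact absurd rfl hxy
    · exact hdist.ge
    · rw [hammingDist_comm]; exact hdist.ge
    · exact absurd rfl hxy

theorem exists_isTiling_pairs (hq : Odd q) : ∃ P, IsTiling q 4 4 3 2 P := by
  have : NeZero q := ⟨hq.pos.ne'⟩
  refine exists_isTiling_of_classes (fun u => {u, pairing u}) (fun u _ => mem_insert_self _ _)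
    (fun u _ v hv => ?_) (fun u hu => isCode_pair hq hu)
  rcases mem_insert.1 hv with rfl | hv
  · rfl
  · rw [mem_singleton.1 hv, pairing_pairing, pair_comm]

end OddAlphabet

section LargeAlphabet

variable {g : ℕ}

/-- The paper's `[g] = {1, …, g} ⊆ ℤ_q`, identified with `ℤ_g`. -/
def ofResidue (a : ZMod g) : ZMod (g + 1) := (a.val + 1 : ℕ)

def toResidue (b : ZMod (g + 1)) : ZMod g := (b.val - 1 : ℕ)

/-- Row `j` holds the offsets of the codeword with zero at position `j`: for `v = (x, y, z, w)`
the rows `3, 2, 1, 0` give the paper's four codewords of `C_{x,y,z}`. -/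
def shift : Fin 4 → Fin 4 → ℕ := ![![0, 2, 2, 1], ![2, 0, 1, 2], ![1, 1, 0, 0], ![0, 0, 0, 0]]

def word (v : Fin 4 → ZMod g) (j : Fin 4) : Fin 4 → ZMod (g + 1) :=
  fun i => if i = j then 0 else ofResidue (v i + shift j i)

def tile (v : Fin 4 → ZMod g) : Finset (Fin 4 → ZMod (g + 1)) := univ.image (word v)

def tileVec (j : Fin 4) (u : Fin 4 → ZMod (g + 1)) : Fin 4 → ZMod g :=
  let r : Fin 4 → ZMod g := fun i => toResidue (u i) - shift j i
  r - Pi.single j (∑ i, r i)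

theorem sum_tileVec (j : Fin 4) (u : Fin 4 → ZMod (g + 1)) : ∑ i, tileVec j u i = 0 := by
  simp [tileVec, sum_sub_distrib]

theorem tileVec_apply_of_ne {j i : Fin 4} (u : Fin 4 → ZMod (g + 1)) (h : i ≠ j) :
    tileVec j u i = toResidue (u i) - shift j i := by
  simp [tileVec, h]

theorem ofResidue_toResidue {b : ZMod (g + 1)} (hb : b ≠ 0) : ofResidue (toResidue b) = b := by
  have hpos : 0 < b.val := ZMod.val_pos.2 hb
  have hlt : b.val - 1 < g := by have := b.val_lt; omega
  rw [ofResidue, toResidue, ZMod.val_cast_of_lt hlt, Nat.sub_add_cancel hpos, ZMod.natCast_zmod_val]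

theorem word_tileVec {u : Fin 4 → ZMod (g + 1)} {j : Fin 4} (hz : ∀ i, u i = 0 ↔ i = j) :
    word (tileVec j u) j = u := by
  funext i
  unfold word
  split_ifs with h
  · exact ((hz i).2 h).symm
  · rw [tileVec_apply_of_ne u h, sub_add_cancel, ofResidue_toResidue ((hz i).not.2 h)]

noncomputable def tileOf (u : Fin 4 → ZMod (g + 1)) : Finset (Fin 4 → ZMod (g + 1)) :=
  tile (tileVec (zeroPos u) u)

theorem mem_tileOf {u : Fin 4 → ZMod (g + 1)} (hu : hammingNorm u = 3) : u ∈ tileOf u := by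
  obtain ⟨j, hj⟩ := hammingNorm_add_one_eq_card_iff.1 (by rw [hu]; rfl)
  rw [tileOf, zeroPos_eq hj]
  exact mem_image.2 ⟨j, mem_univ j, word_tileVec hj⟩

variable [NeZero g]

theorem val_ofResidue (a : ZMod g) : (ofResidue a).val = a.val + 1 :=
  ZMod.val_cast_of_lt (Nat.succ_lt_succ a.val_lt)

theorem ofResidue_ne_zero (a : ZMod g) : ofResidue a ≠ 0 := fun h => by
  simpa [h] using val_ofResidue a

theorem toResidue_ofResidue (a : ZMod g) : toResidue (ofResidue a) = a := by
  simp [toResidue, val_ofResidue]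

theorem ofResidue_injective : Function.Injective (ofResidue (g := g)) :=
  Function.LeftInverse.injective toResidue_ofResidue

theorem word_eq_zero_iff {v : Fin 4 → ZMod g} {j i : Fin 4} : word v j i = 0 ↔ i = j := by
  unfold word
  split_ifs with h <;> simp [h, ofResidue_ne_zero]

theorem hammingNorm_word (v : Fin 4 → ZMod g) (j : Fin 4) : hammingNorm (word v j) = 3 :=
  Nat.add_right_cancel (hammingNorm_add_one_eq_card_iff.2 ⟨j, fun _ => word_eq_zero_iff⟩)

theorem word_injective (v : Fin 4 → ZMod g) : Function.Injective (word v) := fun j j' h =>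
  (word_eq_zero_iff.1 (h ▸ word_eq_zero_iff.2 rfl : word v j' j = 0))

theorem card_tile (v : Fin 4 → ZMod g) : (tile v).card = 4 := by
  rw [tile, card_image_of_injective _ (word_injective v), card_univ, Fintype.card_fin]

theorem shift_ne_shift :
    ∀ j j' i : Fin 4, j ≠ j' → i ≠ j → i ≠ j' → shift j i ≠ shift j' i := by
  decide

theorem shift_lt_three : ∀ j i : Fin 4, shift j i < 3 := by
  decide

theorem word_apply_ne (hg : 3 ≤ g) (v : Fin 4 → ZMod g) {j j' : Fin 4} (hjj' : j ≠ j')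
    (i : Fin 4) : word v j i ≠ word v j' i := by
  unfold word
  by_cases hij : i = j
  · simp [hij, hjj', (ofResidue_ne_zero _).symm]
  by_cases hij' : i = j'
  · simp [hij', hjj'.symm, ofResidue_ne_zero]
  simp only [if_neg hij, if_neg hij', ne_eq, ofResidue_injective.eq_iff, add_right_inj]
  intro h
  have := congrArg ZMod.val h
  rw [ZMod.val_cast_of_lt ((shift_lt_three j i).trans_le hg),
    ZMod.val_cast_of_lt ((shift_lt_three j' i).trans_le hg)] at this
  exact shift_ne_shift j j' i hjj' hij hij' this

theorem hammingDist_word (hg : 3 ≤ g) (v : Fin 4 → ZMod g) {j j' : Fin 4} (hjj' : j ≠ j') :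
    hammingDist (word v j) (word v j') = 4 :=
  (hammingDist_eq_card_iff.2 (word_apply_ne hg v hjj')).trans (Fintype.card_fin 4)

theorem isCode_tile (hg : 3 ≤ g) (v : Fin 4 → ZMod g) : isCode (g + 1) 4 4 3 (tile v) := by
  constructor
  · rintro _ hx
    obtain ⟨j, -, rfl⟩ := mem_image.1 hx
    exact hammingNorm_word v j
  · rintro _ hx _ hy hxy
    obtain ⟨j, -, rfl⟩ := mem_image.1 hx
    obtain ⟨j', -, rfl⟩ := mem_image.1 hy
    exact (hammingDist_word hg v fun h => hxy (congrArg (word v) h)).ge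

theorem tileVec_word {v : Fin 4 → ZMod g} (hv : ∑ i, v i = 0) (j : Fin 4) :
    tileVec j (word v j) = v :=
  eq_of_sum_eq_of_forall_ne j
    (fun i h => by rw [tileVec_apply_of_ne _ h, word, if_neg h, toResidue_ofResidue,
      add_sub_cancel_right])
    (by rw [sum_tileVec, hv])

theorem tileOf_eq_of_mem_tile {v : Fin 4 → ZMod g} (hv : ∑ i, v i = 0)
    {u : Fin 4 → ZMod (g + 1)} (hu : u ∈ tile v) : tileOf u = tile v := by
  obtain ⟨j, -, rfl⟩ := mem_image.1 hu
  rw [tileOf, zeroPos_eq fun i => word_eq_zero_iff, tileVec_word hv]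

theorem exists_isTiling_large (hg : 3 ≤ g) : ∃ P, IsTiling (g + 1) 4 4 3 4 P :=
  exists_isTiling_of_classes tileOf (fun _ hu => mem_tileOf hu)
    (fun _ _ _ hv => tileOf_eq_of_mem_tile (sum_tileVec _ _) hv)
    (fun _ _ => ⟨isCode_tile hg _, card_tile _⟩)

end LargeAlphabet

theorem maxA_two : maxA 2 4 4 3 = 1 :=
  maxA_eq_of_forall_card_le {![0, 1, 1, 1]} (isCode_singleton (by decide)) (card_singleton _)
    fun _ hC => by have := hC.min_card_le; omega

theorem maxA_three : maxA 3 4 4 3 = 2 :=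
  have hu : hammingNorm (![0, 1, 1, 1] : Fin 4 → ZMod 3) = 3 := by decide
  have hpair := isCode_pair (by decide) hu
  maxA_eq_of_forall_card_le _ hpair.1 hpair.2 fun _ hC => by have := hC.min_card_le; omega

theorem maxA_eq_four {q : ℕ} (hq : 4 ≤ q) : maxA q 4 4 3 = 4 := by
  obtain ⟨g, rfl⟩ : ∃ g, q = g + 1 := ⟨q - 1, by omega⟩
  have : NeZero g := ⟨by omega⟩
  exact maxA_eq_of_forall_card_le (tile 0) (isCode_tile (by omega) 0) (card_tile 0)
    fun _ hC => hC.card_le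

/-- Tiling `TOC_q(4,4,3)` for every `q ≥ 2`: the set of all weight-3 words of
length 4 over `Z_q` can be partitioned into pairwise disjoint optimal
`(4,4,3)_q`-codes (codes with minimum distance 4 of size `A_q(4,4,3)`);
moreover for `q ≥ 4` each tile has size `4 = A_q(4,4,3)`. -/
theorem stmt14 (q : ℕ) (hq : 2 ≤ q) :
    (∃ P : Finset (Finset (Fin 4 → ZMod q)),
      (∀ C ∈ P, isCode q 4 4 3 C ∧ C.card = maxA q 4 4 3) ∧
      (∀ C ∈ P, ∀ D ∈ P, C ≠ D → Disjoint C D) ∧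
      ∀ x : Fin 4 → ZMod q, hammingNorm x = 3 → ∃ C ∈ P, x ∈ C) ∧
    (4 ≤ q → maxA q 4 4 3 = 4) := by
  refine ⟨?_, maxA_eq_four⟩
  obtain rfl | rfl | hq4 : q = 2 ∨ q = 3 ∨ 4 ≤ q := by omega
  · rw [maxA_two]
    exact exists_isTiling_singletons
  · rw [maxA_three]
    exact exists_isTiling_pairs (by decide)
  · obtain ⟨g, rfl⟩ : ∃ g, q = g + 1 := ⟨q - 1, by omega⟩
    have : NeZero g := ⟨by omega⟩
    rw [maxA_eq_four hq4]
    exact exists_isTiling_large (by omega)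
end
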